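/- arXiv:2102.09289 — 6 statements merged into one kernel-verified Lean document; each statement's English description precedes it below -/
import Mathlib

section
/- Let G be a graph with maximum degree at most Δ and let v be a vertex of G. Then the number of subtrees of G on exactly s vertices that contain v is at most (e·Δ)^(s-1). -/
open SimpleGraph

noncomputable section
namespace TreeAux

variable {W : Type*} [DecidableEq W] {T : SimpleGraph W}

def thePath (ht : T.IsTree) (r u : W) : T.Walk u r :=
  (ht.existsUnique_path u r).exists.choose

lemma thePath_isPath (ht : T.IsTree) (r u : W) : (thePath ht r u).IsPath :=
  (ht.existsUnique_path u r).exists.choose_spec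

lemma thePath_unique (ht : T.IsTree) {r u : W} (p : T.Walk u r) (hp : p.IsPath) :
    p = thePath ht r u := by
  obtain ⟨q, _, hq⟩ := ht.existsUnique_path u r
  rw [hq p hp, hq (thePath ht r u) (thePath_isPath ht r u)]

def depth (ht : T.IsTree) (r u : W) : ℕ := (thePath ht r u).length

def par (ht : T.IsTree) (r u : W) : W := (thePath ht r u).getVert 1

lemma thePath_root (ht : T.IsTree) (r : W) : thePath ht r r = (Walk.nil : T.Walk r r) := by
  rw [← thePath_unique ht (Walk.nil : T.Walk r r) (Walk.IsPath.nil)]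

@[simp] lemma depth_root (ht : T.IsTree) (r : W) : depth ht r r = 0 := by
  rw [depth, thePath_root]; rfl

@[simp] lemma par_root (ht : T.IsTree) (r : W) : par ht r r = r := by
  rw [par, thePath_root]; exact Walk.getVert_of_length_le _ (by simp)

lemma eq_root_of_depth_eq_zero (ht : T.IsTree) {r u : W} (h : depth ht r u = 0) : u = r := by
  have := SimpleGraph.Walk.eq_of_length_eq_zero h
  exact this

lemma par_spec (ht : T.IsTree) {r u : W} (hu : u ≠ r) :
    ∃ h : T.Adj u (par ht r u),
      thePath ht r u = Walk.cons h (thePath ht r (par ht r u)) := by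
  obtain ⟨w, h, q, hq⟩ := SimpleGraph.Walk.exists_eq_cons_of_ne hu (thePath ht r u)
  have hpq : q.IsPath := by
    have := thePath_isPath ht r u
    rw [hq] at this
    exact this.of_cons
  have hw : w = par ht r u := by
    rw [par, hq]
    simp [Walk.getVert_cons_succ]
  subst hw
  refine ⟨h, ?_⟩
  rw [hq, thePath_unique ht q hpq]

lemma adj_par (ht : T.IsTree) {r u : W} (hu : u ≠ r) : T.Adj u (par ht r u) :=
  (par_spec ht hu).choose

lemma depth_par (ht : T.IsTree) {r u : W} (hu : u ≠ r) :
    depth ht r u = depth ht r (par ht r u) + 1 := by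
  obtain ⟨h, hq⟩ := par_spec ht hu
  rw [depth, depth, hq]
  simp [Walk.length_cons]

lemma par_or (ht : T.IsTree) {r a b : W} (hab : T.Adj a b) :
    par ht r a = b ∨ par ht r b = a := by
  have hne : a ≠ b := hab.ne
  by_cases har : a = r
  · right
    rw [har] at hab hne ⊢
    have : (Walk.cons hab.symm Walk.nil : T.Walk b r).IsPath := by
      simp
      exact fun h => hne h.symm
    rw [par, ← thePath_unique ht _ this]
    simp [Walk.getVert_cons_succ]
  by_cases hbr : b = r
  · left
    rw [hbr] at hab hne ⊢
    have : (Walk.cons hab Walk.nil : T.Walk a r).IsPath := by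
      simp
      exact hne
    rw [par, ← thePath_unique ht _ this]
    simp [Walk.getVert_cons_succ]
  by_cases hap : a ∈ (thePath ht r b).support
  · by_cases hbp : b ∈ (thePath ht r a).support
    · exfalso
      have h1 : (thePath ht r a).dropUntil b hbp = thePath ht r b :=
        thePath_unique ht _ ((thePath_isPath ht r a).dropUntil hbp)
      have h2 : (thePath ht r b).dropUntil a hap = thePath ht r a :=
        thePath_unique ht _ ((thePath_isPath ht r b).dropUntil hap)
      have l1 : ((thePath ht r a).takeUntil b hbp).length
          + ((thePath ht r a).dropUntil b hbp).length = (thePath ht r a).length := by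
        rw [← Walk.length_append, Walk.take_spec]
      have l2 : ((thePath ht r b).takeUntil a hap).length
          + ((thePath ht r b).dropUntil a hap).length = (thePath ht r b).length := by
        rw [← Walk.length_append, Walk.take_spec]
      have t1 : 0 < ((thePath ht r a).takeUntil b hbp).length := by
        rcases Nat.eq_zero_or_pos ((thePath ht r a).takeUntil b hbp).length with h | h
        · exact absurd (Walk.eq_of_length_eq_zero h) hne
        · exact h
      have t2 : 0 < ((thePath ht r b).takeUntil a hap).length := by
        rcases Nat.eq_zero_or_pos ((thePath ht r b).takeUntil a hap).length with h | h
        · exact absurd (Walk.eq_of_length_eq_zero h) (Ne.symm hne)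
        · exact h
      rw [h1] at l1
      rw [h2] at l2
      omega
    · right
      have : (Walk.cons hab.symm (thePath ht r a) : T.Walk b r).IsPath := by
        rw [Walk.cons_isPath_iff]
        exact ⟨thePath_isPath ht r a, hbp⟩
      rw [par, ← thePath_unique ht _ this]
      simp [Walk.getVert_cons_succ]
  · left
    have : (Walk.cons hab (thePath ht r b) : T.Walk a r).IsPath := by
      rw [Walk.cons_isPath_iff]
      exact ⟨thePath_isPath ht r b, hap⟩
    rw [par, ← thePath_unique ht _ this]
    simp [Walk.getVert_cons_succ]

end TreeAux

end


lemma pow_self_le (k : ℕ) (hk : 1 ≤ k) :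
    ((k:ℝ)) ^ k ≤ (k.factorial : ℝ) * Real.exp 1 ^ (k-1) := by
  induction k with
  | zero => omega
  | succ n ih =>
    rcases Nat.eq_zero_or_pos n with rfl | hn
    · simp
    have ih' := ih hn
    have he : (0:ℝ) < Real.exp 1 := Real.exp_pos 1
    have hnp : (0:ℝ) < n := by positivity
    have h2 : (1 + 1/(n:ℝ))^n ≤ Real.exp 1 := by
      calc (1 + 1/(n:ℝ))^n ≤ (Real.exp (1/n))^n := by
            apply pow_le_pow_left₀ (by positivity) (by linarith [Real.add_one_le_exp (1/(n:ℝ))])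
        _ = Real.exp 1 := by
            rw [← Real.exp_nat_mul]; congr 1; field_simp
    have h1 : ((n:ℝ)+1) ^ n ≤ (n:ℝ) ^ n * Real.exp 1 := by
      have e1 : ((n:ℝ)+1) ^ n = (n:ℝ)^n * (1 + 1/n)^n := by
        rw [← mul_pow]; congr 1; field_simp
      rw [e1]
      exact mul_le_mul_of_nonneg_left h2 (by positivity)
    have : ((n:ℝ)+1) ^ (n+1) ≤ ((n+1).factorial : ℝ) * Real.exp 1 ^ n := by
      calc ((n:ℝ)+1) ^ (n+1) = ((n:ℝ)+1) * ((n:ℝ)+1)^n := by ring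
        _ ≤ ((n:ℝ)+1) * ((n:ℝ)^n * Real.exp 1) :=
            mul_le_mul_of_nonneg_left h1 (by positivity)
        _ ≤ ((n:ℝ)+1) * (((n.factorial : ℝ) * Real.exp 1 ^ (n-1)) * Real.exp 1) := by
            apply mul_le_mul_of_nonneg_left _ (by positivity)
            exact mul_le_mul_of_nonneg_right ih' (le_of_lt he)
        _ = ((n:ℝ)+1) * (n.factorial : ℝ) * (Real.exp 1 ^ (n-1) * Real.exp 1) := by ring
        _ = ((n+1).factorial : ℝ) * Real.exp 1 ^ n := by
            rw [Nat.factorial_succ, ← pow_succ]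
            have : n - 1 + 1 = n := by omega
            rw [this]; push_cast; ring
    simpa using this

lemma choose_bound (Δ k : ℕ) :
    ((Nat.choose (Δ * (k+1)) k : ℕ) : ℝ) ≤ (Real.exp 1 * Δ) ^ k := by
  rcases Nat.eq_zero_or_pos k with rfl | hk
  · simp
  have he : (0:ℝ) < Real.exp 1 := Real.exp_pos 1
  have hknz : (0:ℝ) < (k.factorial : ℝ) := by positivity
  have hkp : (0:ℝ) < (k:ℝ) := by exact_mod_cast hk
  have hd : (Nat.choose (Δ*(k+1)) k) * k.factorial ≤ (Δ*(k+1))^k := by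
    calc Nat.choose (Δ*(k+1)) k * k.factorial = k.factorial * Nat.choose (Δ*(k+1)) k := by ring
      _ = (Δ*(k+1)).descFactorial k := (Nat.descFactorial_eq_factorial_mul_choose _ _).symm
      _ ≤ (Δ*(k+1))^k := Nat.descFactorial_le_pow _ _
  have hdR : ((Nat.choose (Δ*(k+1)) k : ℕ) : ℝ) * (k.factorial : ℝ) ≤ ((Δ:ℝ)*((k:ℝ)+1))^k := by
    calc ((Nat.choose (Δ*(k+1)) k : ℕ) : ℝ) * (k.factorial : ℝ)
        = ((Nat.choose (Δ*(k+1)) k * k.factorial : ℕ) : ℝ) := by push_cast; ring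
      _ ≤ (((Δ*(k+1))^k : ℕ) : ℝ) := by exact_mod_cast hd
      _ = ((Δ:ℝ)*((k:ℝ)+1))^k := by push_cast; ring
  have h2 : (1 + 1/(k:ℝ))^k ≤ Real.exp 1 := by
    calc (1 + 1/(k:ℝ))^k ≤ (Real.exp (1/k))^k := by
          apply pow_le_pow_left₀ (by positivity) (by linarith [Real.add_one_le_exp (1/(k:ℝ))])
      _ = Real.exp 1 := by
          rw [← Real.exp_nat_mul]; congr 1; field_simp
  have h3 : ((Δ:ℝ)*((k:ℝ)+1))^k ≤ (Δ:ℝ)^k * ((k:ℝ)^k * Real.exp 1) := by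
    have e1 : ((Δ:ℝ)*((k:ℝ)+1))^k = (Δ:ℝ)^k * ((k:ℝ)^k * (1+1/(k:ℝ))^k) := by
      rw [← mul_pow, ← mul_pow]; congr 1; field_simp
    rw [e1]
    apply mul_le_mul_of_nonneg_left _ (by positivity)
    exact mul_le_mul_of_nonneg_left h2 (by positivity)
  have h4 : (k:ℝ)^k * Real.exp 1 ≤ (k.factorial : ℝ) * Real.exp 1 ^ k := by
    calc (k:ℝ)^k * Real.exp 1 ≤ ((k.factorial : ℝ) * Real.exp 1 ^ (k-1)) * Real.exp 1 :=
          mul_le_mul_of_nonneg_right (pow_self_le k hk) (le_of_lt he)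
      _ = (k.factorial : ℝ) * (Real.exp 1 ^ (k-1) * Real.exp 1) := by ring
      _ = (k.factorial : ℝ) * Real.exp 1 ^ k := by
          rw [← pow_succ]; congr 2; omega
  rw [← mul_le_mul_iff_of_pos_right hknz]
  calc ((Nat.choose (Δ*(k+1)) k : ℕ) : ℝ) * (k.factorial : ℝ)
      ≤ ((Δ:ℝ)*((k:ℝ)+1))^k := hdR
    _ ≤ (Δ:ℝ)^k * ((k:ℝ)^k * Real.exp 1) := h3
    _ ≤ (Δ:ℝ)^k * ((k.factorial : ℝ) * Real.exp 1 ^ k) := mul_le_mul_of_nonneg_left h4 (by positivity)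
    _ = (Real.exp 1 * Δ)^k * (k.factorial : ℝ) := by rw [mul_pow]; ring


open SimpleGraph Finset TreeAux

noncomputable section
namespace TreeCnt

set_option linter.unusedSectionVars false

variable {V : Type*} [Fintype V] [DecidableEq V]

def idx {V : Type*} [Fintype V] (x : V) : ℕ := (Fintype.equivFin V) x

lemma idx_lt (x : V) : idx x < Fintype.card V := (Fintype.equivFin V x).isLt

lemma idx_inj {x y : V} (h : idx x = idx y) : x = y :=
  (Fintype.equivFin V).injective (Fin.ext h)

variable {G : SimpleGraph V} [DecidableRel G.Adj] (H : G.Subgraph) (v : V)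
  (hv : v ∈ H.verts) (ht : H.coe.IsTree)

def rt : H.verts := ⟨v, hv⟩

def dep (x : V) : ℕ :=
  @dite _ (x ∈ H.verts) (Classical.propDecidable _)
    (fun h => depth ht (rt H v hv) ⟨x, h⟩) (fun _ => 0)

def pa (x : V) : V :=
  @dite _ (x ∈ H.verts) (Classical.propDecidable _)
    (fun h => (par ht (rt H v hv) ⟨x, h⟩).val) (fun _ => x)

def key (x : V) : ℕ := Fintype.card V * dep H v hv ht x + idx x

def chl (u : V) : Finset V :=
  @Finset.filter _ (fun w => w ∈ H.verts ∧ w ≠ v ∧ pa H v hv ht w = u)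
    (fun _ => Classical.propDecidable _) Finset.univ

lemma mem_chl {u w : V} :
    w ∈ chl H v hv ht u ↔ w ∈ H.verts ∧ w ≠ v ∧ pa H v hv ht w = u := by
  unfold chl
  rw [@Finset.mem_filter _ _ (fun _ => Classical.propDecidable _)]
  simp only [Finset.mem_univ, true_and]

lemma dep_v : dep H v hv ht v = 0 := by
  rw [dep, dif_pos hv]
  exact depth_root ht (rt H v hv)

lemma eq_v_of_dep_eq_zero {x : V} (hx : x ∈ H.verts) (h : dep H v hv ht x = 0) : x = v := by
  rw [dep, dif_pos hx] at h
  have := eq_root_of_depth_eq_zero ht h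
  exact congrArg Subtype.val this

lemma pa_spec {x : V} (hx : x ∈ H.verts) (hxv : x ≠ v) :
    pa H v hv ht x ∈ H.verts ∧ H.Adj x (pa H v hv ht x) ∧
      dep H v hv ht x = dep H v hv ht (pa H v hv ht x) + 1 := by
  have hne : (⟨x, hx⟩ : H.verts) ≠ rt H v hv := by
    intro h; exact hxv (congrArg Subtype.val h)
  have hadj := adj_par ht hne
  have hd := depth_par ht hne
  have hpa : pa H v hv ht x = (par ht (rt H v hv) ⟨x, hx⟩).val := by
    rw [pa, dif_pos hx]
  have hmem : pa H v hv ht x ∈ H.verts := by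
    rw [hpa]; exact (par ht (rt H v hv) ⟨x, hx⟩).2
  refine ⟨hmem, ?_, ?_⟩
  · have : H.coe.Adj ⟨x, hx⟩ (par ht (rt H v hv) ⟨x, hx⟩) := hadj
    rw [Subgraph.coe_adj] at this
    rw [hpa]; exact this
  · rw [dep, dep, dif_pos hx, dif_pos hmem]
    have : (⟨pa H v hv ht x, hmem⟩ : H.verts) = par ht (rt H v hv) ⟨x, hx⟩ := by
      exact Subtype.ext hpa
    rw [this]
    exact hd

lemma pa_adj_iff {x y : V} :
    H.Adj x y ↔ x ∈ H.verts ∧ y ∈ H.verts ∧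
      ((x ≠ v ∧ pa H v hv ht x = y) ∨ (y ≠ v ∧ pa H v hv ht y = x)) := by
  constructor
  · intro hadj
    have hx : x ∈ H.verts := hadj.fst_mem
    have hy : y ∈ H.verts := hadj.snd_mem
    refine ⟨hx, hy, ?_⟩
    have hcoe : H.coe.Adj ⟨x, hx⟩ ⟨y, hy⟩ := by rw [Subgraph.coe_adj]; exact hadj
    have hne : x ≠ y := fun h => (hadj.ne) h
    rcases par_or ht (r := rt H v hv) hcoe with h | h
    · left
      have hxv : x ≠ v := by
        intro hxv'
        have : (⟨x, hx⟩ : H.verts) = rt H v hv := Subtype.ext hxv'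
        rw [this, par_root] at h
        exact hne (hxv'.trans (congrArg Subtype.val h))
      refine ⟨hxv, ?_⟩
      rw [pa, dif_pos hx, h]
    · right
      have hyv : y ≠ v := by
        intro hyv'
        have : (⟨y, hy⟩ : H.verts) = rt H v hv := Subtype.ext hyv'
        rw [this, par_root] at h
        exact hne ((congrArg Subtype.val h).symm.trans hyv'.symm)
      refine ⟨hyv, ?_⟩
      rw [pa, dif_pos hy, h]
  · rintro ⟨hx, hy, ⟨hxv, hp⟩ | ⟨hyv, hp⟩⟩
    · have := (pa_spec H v hv ht hx hxv).2.1
      rwa [hp] at this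
    · have := (pa_spec H v hv ht hy hyv).2.1
      exact (hp ▸ this).symm

lemma key_inj {x y : V} (h : key H v hv ht x = key H v hv ht y) : x = y := by
  apply idx_inj (x := x) (y := y)
  have hx := idx_lt x
  have hy := idx_lt y
  rw [key, key] at h
  have h1 : (Fintype.card V * dep H v hv ht x + idx x) % Fintype.card V
      = (Fintype.card V * dep H v hv ht y + idx y) % Fintype.card V := by rw [h]
  rwa [Nat.mul_add_mod, Nat.mul_add_mod, Nat.mod_eq_of_lt hx, Nat.mod_eq_of_lt hy] at h1

lemma chl_mem {u w : V} (hw : w ∈ chl H v hv ht u) :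
    w ∈ H.verts ∧ w ≠ v ∧ pa H v hv ht w = u ∧ H.Adj u w := by
  rw [mem_chl] at hw
  obtain ⟨h1, h2, h3⟩ := hw
  refine ⟨h1, h2, h3, ?_⟩
  have := (pa_spec H v hv ht h1 h2).2.1
  rw [h3] at this
  exact this.symm

lemma chl_nbr {u w : V} (hw : w ∈ chl H v hv ht u) : w ∈ G.neighborFinset u := by
  rw [mem_neighborFinset]
  exact H.adj_sub (chl_mem H v hv ht hw).2.2.2


variable (s : ℕ)

def vertsF : Finset V := Set.Finite.toFinset (H.verts.toFinite)

lemma mem_vertsF {x : V} : x ∈ vertsF H ↔ x ∈ H.verts := by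
  rw [vertsF, Set.Finite.mem_toFinset]

lemma vertsF_card (hsc : H.verts.ncard = s) : (vertsF H).card = s := by
  rw [vertsF, ← Set.ncard_eq_toFinset_card _ (H.verts.toFinite), hsc]

def Kf : Finset ℕ := (vertsF H).image (key H v hv ht)

lemma Kf_card (hsc : H.verts.ncard = s) : (Kf H v hv ht).card = s := by
  rw [Kf, Finset.card_image_of_injOn (fun a _ b _ h => key_inj H v hv ht h)]
  exact vertsF_card H s hsc

def oI (hsc : H.verts.ncard = s) : Fin s ≃o {x // x ∈ (Kf H v hv ht)} :=
  Finset.orderIsoOfFin _ (Kf_card H v hv ht s hsc)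

lemma ord_aux (hsc : H.verts.ncard = s) (i : Fin s) :
    ∃! u, u ∈ vertsF H ∧ key H v hv ht u = (oI H v hv ht s hsc i : ℕ) := by
  have hmem : ((oI H v hv ht s hsc i : ℕ)) ∈ Kf H v hv ht := (oI H v hv ht s hsc i).2
  simp only [Kf, mem_image] at hmem
  obtain ⟨u, hu, hku⟩ := hmem
  refine ⟨u, ⟨hu, hku⟩, ?_⟩
  rintro w ⟨hw, hkw⟩
  exact key_inj H v hv ht (hkw.trans hku.symm)

def ord (hsc : H.verts.ncard = s) (i : Fin s) : V :=
  Finset.choose (fun u => key H v hv ht u = (oI H v hv ht s hsc i : ℕ)) (vertsF H)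
    (by
      obtain ⟨u, ⟨h1, h2⟩, h3⟩ := ord_aux H v hv ht s hsc i
      exact ⟨u, ⟨h1, h2⟩, fun w ⟨hw1, hw2⟩ => h3 w ⟨hw1, hw2⟩⟩)

lemma ord_mem (hsc : H.verts.ncard = s) (i : Fin s) : ord H v hv ht s hsc i ∈ H.verts := by
  rw [← mem_vertsF]
  exact Finset.choose_mem _ _ _

lemma key_ord (hsc : H.verts.ncard = s) (i : Fin s) :
    key H v hv ht (ord H v hv ht s hsc i) = (oI H v hv ht s hsc i : ℕ) :=
  Finset.choose_property (fun u => key H v hv ht u = (oI H v hv ht s hsc i : ℕ)) (vertsF H) _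

lemma ord_lt_iff (hsc : H.verts.ncard = s) {i j : Fin s} :
    key H v hv ht (ord H v hv ht s hsc i) < key H v hv ht (ord H v hv ht s hsc j) ↔ i < j := by
  rw [key_ord, key_ord]
  constructor
  · intro h
    exact (oI H v hv ht s hsc).lt_iff_lt.mp (Subtype.coe_lt_coe.mp h)
  · intro h
    exact Subtype.coe_lt_coe.mpr ((oI H v hv ht s hsc).lt_iff_lt.mpr h)

lemma ord_inj (hsc : H.verts.ncard = s) {i j : Fin s} (h : ord H v hv ht s hsc i = ord H v hv ht s hsc j) : i = j := by
  by_contra hne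
  rcases lt_or_gt_of_ne hne with hlt | hlt
  · have := (ord_lt_iff H v hv ht s hsc).mpr hlt
    rw [h] at this
    exact lt_irrefl _ this
  · have := (ord_lt_iff H v hv ht s hsc).mpr hlt
    rw [h] at this
    exact lt_irrefl _ this

lemma ord_surj (hsc : H.verts.ncard = s) {x : V} (hx : x ∈ H.verts) : ∃ i, ord H v hv ht s hsc i = x := by
  have hk : key H v hv ht x ∈ Kf H v hv ht := by
    rw [Kf, mem_image]
    exact ⟨x, (mem_vertsF H).mpr hx, rfl⟩
  refine ⟨(oI H v hv ht s hsc).symm ⟨_, hk⟩, ?_⟩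
  apply key_inj H v hv ht
  rw [key_ord]
  simp

lemma key_v_min {x : V} (hx : x ∈ H.verts) (hxv : x ≠ v) :
    key H v hv ht v < key H v hv ht x := by
  have h1 : dep H v hv ht x ≠ 0 := fun h => hxv (eq_v_of_dep_eq_zero H v hv ht hx h)
  have h2 := idx_lt v
  have h3 := dep_v H v hv ht
  rw [key, key, h3]
  have : 1 ≤ dep H v hv ht x := Nat.one_le_iff_ne_zero.mpr h1
  nlinarith [Nat.mul_le_mul_left (Fintype.card V) this]

lemma ord_zero (hsc : H.verts.ncard = s) (hs1 : 0 < s) : ord H v hv ht s hsc ⟨0, hs1⟩ = v := by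
  obtain ⟨i, hi⟩ := ord_surj H v hv ht s hsc hv
  by_contra hne
  have h0i : (⟨0, hs1⟩ : Fin s) < i := by
    rcases Nat.eq_zero_or_pos (i : ℕ) with h | h
    · exfalso
      apply hne
      have hieq : (⟨0, hs1⟩ : Fin s) = i := Fin.ext (by simp [h])
      rw [hieq]
      exact hi
    · exact h
  have := (ord_lt_iff H v hv ht s hsc).mpr h0i
  rw [hi] at this
  have h2 := key_v_min H v hv ht (ord_mem H v hv ht s hsc ⟨0, hs1⟩) hne
  omega


def lbl (G' : SimpleGraph V) [DecidableRel G'.Adj] (u w : V) : ℕ :=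
  ((G'.neighborFinset u).filter (fun x => idx x < idx w)).card

lemma lbl_lt {Δ : ℕ} (hΔ : 1 ≤ Δ) (hdeg : ∀ u, G.degree u ≤ Δ) {u w : V}
    (hw : w ∈ G.neighborFinset u) : lbl G u w < Δ := by
  have hsub : ((G.neighborFinset u).filter (fun x => idx x < idx w))
      ⊆ (G.neighborFinset u).erase w := by
    intro x hx
    rw [mem_filter] at hx
    rw [mem_erase]
    exact ⟨fun h => by simp [h] at hx, hx.1⟩
  have h1 : lbl G u w ≤ ((G.neighborFinset u).erase w).card := Finset.card_le_card hsub
  rw [Finset.card_erase_of_mem hw] at h1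
  have h2 : (G.neighborFinset u).card ≤ Δ := hdeg u
  have h3 : 1 ≤ (G.neighborFinset u).card := Finset.card_pos.mpr ⟨w, hw⟩
  omega

lemma lbl_injOn {u w1 w2 : V} (h1 : w1 ∈ G.neighborFinset u) (h2 : w2 ∈ G.neighborFinset u)
    (h : lbl G u w1 = lbl G u w2) : w1 = w2 := by
  rcases lt_trichotomy (idx w1) (idx w2) with hlt | heq | hlt
  · exfalso
    have hss : ((G.neighborFinset u).filter (fun x => idx x < idx w1))
        ⊂ ((G.neighborFinset u).filter (fun x => idx x < idx w2)) := by
      rw [Finset.ssubset_iff_of_subset (fun x hx => mem_filter.mpr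
        ⟨(mem_filter.mp hx).1, lt_trans (mem_filter.mp hx).2 hlt⟩)]
      exact ⟨w1, mem_filter.mpr ⟨h1, hlt⟩, fun hc => by simp at hc⟩
    have := Finset.card_lt_card hss
    rw [lbl, lbl] at h
    omega
  · exact idx_inj heq
  · exfalso
    have hss : ((G.neighborFinset u).filter (fun x => idx x < idx w2))
        ⊂ ((G.neighborFinset u).filter (fun x => idx x < idx w1)) := by
      rw [Finset.ssubset_iff_of_subset (fun x hx => mem_filter.mpr
        ⟨(mem_filter.mp hx).1, lt_trans (mem_filter.mp hx).2 hlt⟩)]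
      exact ⟨w2, mem_filter.mpr ⟨h2, hlt⟩, fun hc => by simp at hc⟩
    have := Finset.card_lt_card hss
    rw [lbl, lbl] at h
    omega

def codeF (Δ : ℕ) (hsc : H.verts.ncard = s) (hΔ : 1 ≤ Δ) (hdeg : ∀ u, G.degree u ≤ Δ) (i : Fin s) :
    Finset (Fin Δ) :=
  (chl H v hv ht (ord H v hv ht s hsc i)).attach.image
    (fun w => ⟨lbl G (ord H v hv ht s hsc i) w.1,
      lbl_lt hΔ hdeg (chl_nbr H v hv ht w.2)⟩)

lemma codeF_card (Δ : ℕ) (hΔ : 1 ≤ Δ) (hdeg : ∀ u, G.degree u ≤ Δ) (hsc : H.verts.ncard = s) (i : Fin s) :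
    (codeF H v hv ht s Δ hsc hΔ hdeg i).card = (chl H v hv ht (ord H v hv ht s hsc i)).card := by
  rw [codeF, Finset.card_image_of_injOn, Finset.card_attach]
  intro a _ b _ hab
  have : lbl G (ord H v hv ht s hsc i) a.1 = lbl G (ord H v hv ht s hsc i) b.1 :=
    congrArg Fin.val hab
  exact Subtype.ext (lbl_injOn (chl_nbr H v hv ht a.2) (chl_nbr H v hv ht b.2) this)

lemma chl_recover (Δ : ℕ) (hΔ : 1 ≤ Δ) (hdeg : ∀ u, G.degree u ≤ Δ) (hsc : H.verts.ncard = s) (i : Fin s) :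
    chl H v hv ht (ord H v hv ht s hsc i)
      = (G.neighborFinset (ord H v hv ht s hsc i)).filter
          (fun w => lbl G (ord H v hv ht s hsc i) w
            ∈ (codeF H v hv ht s Δ hsc hΔ hdeg i).image Fin.val) := by
  ext w
  constructor
  · intro hw
    rw [mem_filter]
    refine ⟨chl_nbr H v hv ht hw, ?_⟩
    rw [mem_image]
    refine ⟨⟨lbl G (ord H v hv ht s hsc i) w, lbl_lt hΔ hdeg (chl_nbr H v hv ht hw)⟩, ?_, rfl⟩
    rw [codeF, mem_image]
    exact ⟨⟨w, hw⟩, Finset.mem_attach _ _, rfl⟩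
  · intro hw
    rw [mem_filter, mem_image] at hw
    obtain ⟨hwn, l, hl, hlv⟩ := hw
    rw [codeF, mem_image] at hl
    obtain ⟨w', -, hw'⟩ := hl
    have : lbl G (ord H v hv ht s hsc i) w'.1 = lbl G (ord H v hv ht s hsc i) w := by
      rw [← hlv, ← hw']
    have := lbl_injOn (chl_nbr H v hv ht w'.2) hwn this
    rw [← this]
    exact w'.2

def code (Δ : ℕ) (hΔ : 1 ≤ Δ) (hdeg : ∀ u, G.degree u ≤ Δ) (hsc : H.verts.ncard = s) : Finset (Fin s × Fin Δ) :=
  Finset.univ.biUnion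
    (fun i => (codeF H v hv ht s Δ hsc hΔ hdeg i).image (fun l => (i, l)))

lemma mem_code (Δ : ℕ) (hΔ : 1 ≤ Δ) (hdeg : ∀ u, G.degree u ≤ Δ) (hsc : H.verts.ncard = s) {i : Fin s} {l : Fin Δ} :
    (i, l) ∈ code H v hv ht s Δ hΔ hdeg hsc ↔ l ∈ codeF H v hv ht s Δ hsc hΔ hdeg i := by
  rw [code, Finset.mem_biUnion]
  constructor
  · rintro ⟨j, -, hj⟩
    rw [mem_image] at hj
    obtain ⟨l', hl', heq⟩ := hj
    rw [Prod.mk.injEq] at heq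
    obtain ⟨rfl, rfl⟩ := heq
    exact hl'
  · intro hl
    exact ⟨i, Finset.mem_univ i, mem_image.mpr ⟨l, hl, rfl⟩⟩


lemma chl_disj {u1 u2 : V} (h : u1 ≠ u2) :
    Disjoint (chl H v hv ht u1) (chl H v hv ht u2) := by
  rw [Finset.disjoint_left]
  intro w hw1 hw2
  have p1 := (chl_mem H v hv ht hw1).2.2.1
  have p2 := (chl_mem H v hv ht hw2).2.2.1
  exact h (p1.symm.trans p2)

lemma biUnion_chl (hsc : H.verts.ncard = s) :
    Finset.univ.biUnion (fun i : Fin s => chl H v hv ht (ord H v hv ht s hsc i))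
      = (vertsF H).erase v := by
  ext x
  rw [Finset.mem_biUnion, mem_erase]
  constructor
  · rintro ⟨i, -, hx⟩
    have := chl_mem H v hv ht hx
    exact ⟨this.2.1, (mem_vertsF H).mpr this.1⟩
  · rintro ⟨hxv, hxm⟩
    have hxm' := (mem_vertsF H).mp hxm
    have hpa := pa_spec H v hv ht hxm' hxv
    obtain ⟨i, hi⟩ := ord_surj H v hv ht s hsc hpa.1
    refine ⟨i, Finset.mem_univ i, ?_⟩
    rw [mem_chl]
    exact ⟨hxm', hxv, by rw [hi]⟩

lemma code_card (Δ : ℕ) (hΔ : 1 ≤ Δ) (hdeg : ∀ u, G.degree u ≤ Δ) (hsc : H.verts.ncard = s) :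
    (code H v hv ht s Δ hΔ hdeg hsc).card = s - 1 := by
  have hd1 : ∀ i ∈ (Finset.univ : Finset (Fin s)), ∀ j ∈ Finset.univ, i ≠ j →
      Disjoint ((codeF H v hv ht s Δ hsc hΔ hdeg i).image (fun l => (i, l)))
        ((codeF H v hv ht s Δ hsc hΔ hdeg j).image (fun l => (j, l))) := by
    rintro i - j - hij
    rw [Finset.disjoint_left]
    rintro p hp1 hp2
    rw [mem_image] at hp1 hp2
    obtain ⟨l1, -, rfl⟩ := hp1
    obtain ⟨l2, -, h2⟩ := hp2
    exact hij (congrArg Prod.fst h2).symm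
  have hd2 : ∀ i ∈ (Finset.univ : Finset (Fin s)), ∀ j ∈ Finset.univ, i ≠ j →
      Disjoint (chl H v hv ht (ord H v hv ht s hsc i))
        (chl H v hv ht (ord H v hv ht s hsc j)) := by
    rintro i - j - hij
    apply chl_disj H v hv ht
    intro h
    exact hij (ord_inj H v hv ht s hsc h)
  have e1 : ∀ i : Fin s, ((codeF H v hv ht s Δ hsc hΔ hdeg i).image
      (fun l => (i, l))).card = (chl H v hv ht (ord H v hv ht s hsc i)).card := by
    intro i
    rw [Finset.card_image_of_injective _ (fun a b hab => congrArg Prod.snd hab)]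
    exact codeF_card H v hv ht s Δ hΔ hdeg hsc i
  rw [code, Finset.card_biUnion hd1, Finset.sum_congr rfl (fun i _ => e1 i),
    ← Finset.card_biUnion hd2, biUnion_chl H v hv ht s hsc,
    Finset.card_erase_of_mem ((mem_vertsF H).mpr hv), vertsF_card H s hsc]


theorem code_inj (H1 H2 : G.Subgraph) (hv1 : v ∈ H1.verts) (hv2 : v ∈ H2.verts)
    (ht1 : H1.coe.IsTree) (ht2 : H2.coe.IsTree) (Δ : ℕ) (hΔ : 1 ≤ Δ)
    (hdeg : ∀ u, G.degree u ≤ Δ) (hsc1 : H1.verts.ncard = s) (hsc2 : H2.verts.ncard = s)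
    (hs : 1 ≤ s)
    (hc : code H1 v hv1 ht1 s Δ hΔ hdeg hsc1 = code H2 v hv2 ht2 s Δ hΔ hdeg hsc2) :
    H1 = H2 := by
  have hcF : ∀ i : Fin s, codeF H1 v hv1 ht1 s Δ hsc1 hΔ hdeg i
      = codeF H2 v hv2 ht2 s Δ hsc2 hΔ hdeg i := by
    intro i
    ext l
    rw [← mem_code H1 v hv1 ht1 s Δ hΔ hdeg hsc1, ← mem_code H2 v hv2 ht2 s Δ hΔ hdeg hsc2, hc]
  have hN := fun (x : V) => idx_lt x
  -- main strong induction
  have main : ∀ k : ℕ, ∀ hk : k < s,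
      ord H1 v hv1 ht1 s hsc1 ⟨k, hk⟩ = ord H2 v hv2 ht2 s hsc2 ⟨k, hk⟩ ∧
      dep H1 v hv1 ht1 (ord H1 v hv1 ht1 s hsc1 ⟨k, hk⟩)
        = dep H2 v hv2 ht2 (ord H1 v hv1 ht1 s hsc1 ⟨k, hk⟩) := by
    intro k
    induction k using Nat.strong_induction_on with
    | _ k IH =>
    intro hk
    -- children sets agree below k
    have hch : ∀ j : Fin s, (j : ℕ) < k →
        chl H1 v hv1 ht1 (ord H1 v hv1 ht1 s hsc1 j)
          = chl H2 v hv2 ht2 (ord H2 v hv2 ht2 s hsc2 j) := by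
      intro j hj
      have hoj : ord H1 v hv1 ht1 s hsc1 j = ord H2 v hv2 ht2 s hsc2 j := (IH j hj j.2).1
      rw [chl_recover H1 v hv1 ht1 s Δ hΔ hdeg hsc1 j,
        chl_recover H2 v hv2 ht2 s Δ hΔ hdeg hsc2 j, hcF j, hoj]
    rcases Nat.eq_zero_or_pos k with rfl | hkpos
    · constructor
      · rw [ord_zero H1 v hv1 ht1 s hsc1 hk, ord_zero H2 v hv2 ht2 s hsc2 hk]
      · rw [ord_zero H1 v hv1 ht1 s hsc1 hk, dep_v, dep_v]
    -- k > 0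
    have hk0 : k ≠ 0 := Nat.pos_iff_ne_zero.mp hkpos
    set Jset : Finset (Fin s) := Finset.univ.filter (fun j : Fin s => (j : ℕ) < k) with hJ
    set C : Finset V :=
      (Jset.biUnion (fun j => chl H1 v hv1 ht1 (ord H1 v hv1 ht1 s hsc1 j)))
        \ (Jset.image (ord H1 v hv1 ht1 s hsc1)) with hCdef
    have hJmem : ∀ j : Fin s, j ∈ Jset ↔ (j : ℕ) < k := by
      intro j; rw [hJ, mem_filter]; simp
    have hC2 : C = (Jset.biUnion (fun j => chl H2 v hv2 ht2 (ord H2 v hv2 ht2 s hsc2 j)))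
        \ (Jset.image (ord H2 v hv2 ht2 s hsc2)) := by
      rw [hCdef]
      congr 1
      · apply Finset.biUnion_congr rfl
        intro j hj
        exact hch j ((hJmem j).mp hj)
      · apply Finset.image_congr
        intro j hj
        exact (IH j ((hJmem j).mp hj) j.2).1
    -- basic facts about elements of C
    have hCfacts : ∀ w ∈ C, dep H1 v hv1 ht1 w = dep H2 v hv2 ht2 w ∧
        w ∈ H1.verts ∧ w ∈ H2.verts ∧ w ≠ v ∧
        ∃ j ∈ Jset, pa H1 v hv1 ht1 w = ord H1 v hv1 ht1 s hsc1 j ∧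
          pa H2 v hv2 ht2 w = ord H1 v hv1 ht1 s hsc1 j := by
      intro w hw
      rw [hCdef, Finset.mem_sdiff, Finset.mem_biUnion] at hw
      obtain ⟨⟨j, hj, hwj⟩, -⟩ := hw
      have hjk : (j : ℕ) < k := (hJmem j).mp hj
      have hm1 := chl_mem H1 v hv1 ht1 hwj
      have hwj2 : w ∈ chl H2 v hv2 ht2 (ord H2 v hv2 ht2 s hsc2 j) := by
        rw [← hch j hjk]; exact hwj
      have hm2 := chl_mem H2 v hv2 ht2 hwj2
      have hoj : ord H1 v hv1 ht1 s hsc1 j = ord H2 v hv2 ht2 s hsc2 j := (IH j hjk j.2).1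
      have hd1 : dep H1 v hv1 ht1 w = dep H1 v hv1 ht1 (ord H1 v hv1 ht1 s hsc1 j) + 1 := by
        have := (pa_spec H1 v hv1 ht1 hm1.1 hm1.2.1).2.2
        rwa [hm1.2.2.1] at this
      have hd2 : dep H2 v hv2 ht2 w = dep H2 v hv2 ht2 (ord H1 v hv1 ht1 s hsc1 j) + 1 := by
        have := (pa_spec H2 v hv2 ht2 hm2.1 hm2.2.1).2.2
        rw [hm2.2.2.1] at this
        rwa [hoj]
      have hdj : dep H1 v hv1 ht1 (ord H1 v hv1 ht1 s hsc1 j)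
          = dep H2 v hv2 ht2 (ord H1 v hv1 ht1 s hsc1 j) := (IH j hjk j.2).2
      refine ⟨by omega, hm1.1, hm2.1, hm1.2.1, j, hj, hm1.2.2.1, by rw [hm2.2.2.1, hoj]⟩
    have hkeyC : ∀ w ∈ C, key H1 v hv1 ht1 w = key H2 v hv2 ht2 w := by
      intro w hw
      have := (hCfacts w hw).1
      rw [key, key, this]
    -- ord1 k ∈ C and is key1-minimal
    have hmemC : ∀ (HA : G.Subgraph) (hvA : v ∈ HA.verts) (htA : HA.coe.IsTree)
        (hscA : HA.verts.ncard = s) (CA : Finset V), CA =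
          (Jset.biUnion (fun j => chl HA v hvA htA (ord HA v hvA htA s hscA j)))
          \ (Jset.image (ord HA v hvA htA s hscA)) →
        ord HA v hvA htA s hscA ⟨k, hk⟩ ∈ CA ∧
          ∀ w ∈ CA, key HA v hvA htA (ord HA v hvA htA s hscA ⟨k, hk⟩)
            ≤ key HA v hvA htA w := by
      intro HA hvA htA hscA CA hCA
      have hxV : ord HA v hvA htA s hscA ⟨k, hk⟩ ∈ HA.verts := ord_mem HA v hvA htA s hscA _
      have hxv : ord HA v hvA htA s hscA ⟨k, hk⟩ ≠ v := by
        intro h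
        have h0 : (0 : ℕ) < s := hs
        have := ord_zero HA v hvA htA s hscA h0
        have heq := ord_inj HA v hvA htA s hscA (h.trans this.symm)
        have : k = 0 := congrArg Fin.val heq
        exact hk0 this
      have hpa := pa_spec HA v hvA htA hxV hxv
      obtain ⟨jp, hjp⟩ := ord_surj HA v hvA htA s hscA hpa.1
      have hkeylt : key HA v hvA htA (ord HA v hvA htA s hscA jp)
          < key HA v hvA htA (ord HA v hvA htA s hscA ⟨k, hk⟩) := by
        rw [hjp, key, key]
        have h1 := hpa.2.2
        have h2 := hN (pa HA v hvA htA (ord HA v hvA htA s hscA ⟨k, hk⟩))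
        rw [h1]
        nlinarith [hN (ord HA v hvA htA s hscA ⟨k, hk⟩)]
      have hjplt : (jp : ℕ) < k := (ord_lt_iff HA v hvA htA s hscA).mp hkeylt
      constructor
      · rw [hCA, Finset.mem_sdiff, Finset.mem_biUnion]
        constructor
        · refine ⟨jp, (hJmem jp).mpr hjplt, ?_⟩
          rw [mem_chl]
          exact ⟨hxV, hxv, hjp.symm ▸ rfl⟩
        · intro hcon
          rw [Finset.mem_image] at hcon
          obtain ⟨j', hj', hj'eq⟩ := hcon
          have := ord_inj HA v hvA htA s hscA hj'eq
          have hj'k := (hJmem j').mp hj'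
          rw [this] at hj'k
          exact lt_irrefl k hj'k
      · intro w hw
        rw [hCA, Finset.mem_sdiff, Finset.mem_biUnion] at hw
        obtain ⟨⟨j, hj, hwj⟩, hwim⟩ := hw
        have hwV : w ∈ HA.verts := (chl_mem HA v hvA htA hwj).1
        obtain ⟨jw, hjw⟩ := ord_surj HA v hvA htA s hscA hwV
        have hjwk : ¬ ((jw : ℕ) < k) := by
          intro hcon
          apply hwim
          rw [Finset.mem_image]
          exact ⟨jw, (hJmem jw).mpr hcon, hjw⟩
        rcases Nat.lt_or_ge k (jw : ℕ) with hlt | hge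
        · have : (⟨k, hk⟩ : Fin s) < jw := hlt
          have := (ord_lt_iff HA v hvA htA s hscA).mpr this
          rw [hjw] at this
          exact le_of_lt this
        · have hkeq : (jw : ℕ) = k := by omega
          have : jw = ⟨k, hk⟩ := Fin.ext hkeq
          rw [this] at hjw
          rw [hjw]
    obtain ⟨hx1, hmin1⟩ := hmemC H1 hv1 ht1 hsc1 C hCdef
    obtain ⟨hx2, hmin2⟩ := hmemC H2 hv2 ht2 hsc2 C hC2
    have heqk : key H1 v hv1 ht1 (ord H1 v hv1 ht1 s hsc1 ⟨k, hk⟩)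
        = key H1 v hv1 ht1 (ord H2 v hv2 ht2 s hsc2 ⟨k, hk⟩) := by
      have a1 := hmin1 _ hx2
      have a2 := hmin2 _ hx1
      have b1 := hkeyC _ hx1
      have b2 := hkeyC _ hx2
      omega
    have hordk := key_inj H1 v hv1 ht1 heqk
    refine ⟨hordk, ?_⟩
    exact (hCfacts _ hx1).1
  -- conclude H1 = H2
  have hordeq : ∀ i : Fin s, ord H1 v hv1 ht1 s hsc1 i = ord H2 v hv2 ht2 s hsc2 i :=
    fun i => (main i.1 i.2).1
  have hverts : H1.verts = H2.verts := by
    ext x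
    constructor
    · intro hx
      obtain ⟨i, hi⟩ := ord_surj H1 v hv1 ht1 s hsc1 hx
      rw [← hi, hordeq i]
      exact ord_mem H2 v hv2 ht2 s hsc2 i
    · intro hx
      obtain ⟨i, hi⟩ := ord_surj H2 v hv2 ht2 s hsc2 hx
      rw [← hi, ← hordeq i]
      exact ord_mem H1 v hv1 ht1 s hsc1 i
  have hpa : ∀ x, x ∈ H1.verts → x ≠ v → pa H1 v hv1 ht1 x = pa H2 v hv2 ht2 x := by
    intro x hx hxv
    have hps := pa_spec H1 v hv1 ht1 hx hxv
    obtain ⟨j, hj⟩ := ord_surj H1 v hv1 ht1 s hsc1 hps.1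
    have hx1 : x ∈ chl H1 v hv1 ht1 (ord H1 v hv1 ht1 s hsc1 j) := by
      rw [mem_chl]
      exact ⟨hx, hxv, hj.symm ▸ rfl⟩
    have hch : chl H1 v hv1 ht1 (ord H1 v hv1 ht1 s hsc1 j)
        = chl H2 v hv2 ht2 (ord H2 v hv2 ht2 s hsc2 j) := by
      rw [chl_recover H1 v hv1 ht1 s Δ hΔ hdeg hsc1 j,
        chl_recover H2 v hv2 ht2 s Δ hΔ hdeg hsc2 j, hcF j, hordeq j]
    have hx2 : x ∈ chl H2 v hv2 ht2 (ord H2 v hv2 ht2 s hsc2 j) := hch ▸ hx1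
    have := (chl_mem H2 v hv2 ht2 hx2).2.2.1
    rw [this, ← hordeq j, ← hj]
  apply SimpleGraph.Subgraph.ext hverts
  ext x y
  rw [pa_adj_iff H1 v hv1 ht1, pa_adj_iff H2 v hv2 ht2, hverts]
  constructor
  · rintro ⟨h1, h2, ⟨h3, h4⟩ | ⟨h3, h4⟩⟩
    · exact ⟨h1, h2, Or.inl ⟨h3, by rw [← hpa x (hverts ▸ h1) h3]; exact h4⟩⟩
    · exact ⟨h1, h2, Or.inr ⟨h3, by rw [← hpa y (hverts ▸ h2) h3]; exact h4⟩⟩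
  · rintro ⟨h1, h2, ⟨h3, h4⟩ | ⟨h3, h4⟩⟩
    · exact ⟨h1, h2, Or.inl ⟨h3, by rw [hpa x (hverts ▸ h1) h3]; exact h4⟩⟩
    · exact ⟨h1, h2, Or.inr ⟨h3, by rw [hpa y (hverts ▸ h2) h3]; exact h4⟩⟩

end TreeCnt

end

open TreeCnt

/-- If `G` has maximum degree at most `Δ` and `v` is a vertex, the number of
subtrees of `G` on exactly `s` vertices containing `v` is at most `(eΔ)^(s-1)`. -/
theorem stmt_0 {V : Type*} [Fintype V] [DecidableEq V] (G : SimpleGraph V)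
    [DecidableRel G.Adj] (Δ : ℕ) (hΔ : 1 ≤ Δ)
    (hdeg : ∀ u, G.degree u ≤ Δ) (v : V) (s : ℕ) (hs : 1 ≤ s) :
    (({H : G.Subgraph | v ∈ H.verts ∧ H.verts.ncard = s ∧ H.coe.IsTree} :
        Set G.Subgraph).ncard : ℝ)
      ≤ (Real.exp 1 * Δ) ^ (s - 1) := by
  classical
  set S : Set G.Subgraph := {H : G.Subgraph | v ∈ H.verts ∧ H.verts.ncard = s ∧ H.coe.IsTree}
    with hS
  let F : S → {c : Finset (Fin s × Fin Δ) // c.card = s - 1} :=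
    fun p => ⟨code p.1 v p.2.1 p.2.2.2 s Δ hΔ hdeg p.2.2.1,
      code_card p.1 v p.2.1 p.2.2.2 s Δ hΔ hdeg p.2.2.1⟩
  have hFinj : Function.Injective F := by
    rintro ⟨H1, h1⟩ ⟨H2, h2⟩ hab
    have := congrArg Subtype.val hab
    simp only [F] at this
    exact Subtype.ext (code_inj v s H1 H2 h1.1 h2.1 h1.2.2 h2.2.2 Δ hΔ hdeg
      h1.2.1 h2.2.1 hs this)
  have hcard : S.ncard ≤ (s * Δ).choose (s - 1) := by
    rw [← Nat.card_coe_set_eq]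
    calc Nat.card S ≤ Nat.card {c : Finset (Fin s × Fin Δ) // c.card = s - 1} :=
          Nat.card_le_card_of_injective F hFinj
      _ = Fintype.card {c : Finset (Fin s × Fin Δ) // c.card = s - 1} :=
          Nat.card_eq_fintype_card
      _ = (Fintype.card (Fin s × Fin Δ)).choose (s - 1) := Fintype.card_finset_len _
      _ = (s * Δ).choose (s - 1) := by simp
  calc (S.ncard : ℝ) ≤ ((s * Δ).choose (s - 1) : ℝ) := by exact_mod_cast hcard
    _ ≤ (Real.exp 1 * Δ) ^ (s - 1) := by
        have h1 : s * Δ = Δ * ((s - 1) + 1) := by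
          have : s - 1 + 1 = s := by omega
          rw [this]; ring
        rw [h1]
        exact choose_bound Δ (s - 1)
end

section
/- Let D be a digraph on n vertices, C a graph (the conflict graph), and Λ a function assigning to each edge of D a subset of V(C). Suppose that for any two disjoint sets S, T ⊆ V(D) each of size k, and any subset X ⊆ V(C) with |X| ≤ n − 1, there exists an edge e of D from S to T and an element y ∈ Λ(e) \ X such that y has no neighbour in X (in C). Then D contains an admissible directed path with n − 2k + 1 vertices, i.e., a directed path P together with an injective choice of representatives y_e ∈ Λ(e) for each edge e of P such that the set of chosen representatives is an independent set in C. -/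
set_option linter.unusedSectionVars false
set_option maxHeartbeats 1000000

section CFDFS
variable {V W : Type*} [Fintype V] [DecidableEq V] [DecidableEq W]

/-- Reversed admissible path: the list `L` is the path in reverse order
(head = end of path), `R` the representatives (head = rep of last edge). -/
inductive PR (D : V → V → Prop) (Λ : V → V → Set W) : List V → List W → Prop
  | single (v : V) : PR D Λ [v] []
  | cons (v u : V) (y : W) (L : List V) (R : List W) :
      PR D Λ (u :: L) R → D u v → y ∈ Λ u v → PR D Λ (v :: u :: L) (y :: R)

variable {D : V → V → Prop} {C : SimpleGraph W} {Λ : V → V → Set W}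

lemma PR.length_eq {L R} (h : PR D Λ L R) : L.length = R.length + 1 := by
  induction h with
  | single v => simp
  | cons v u y L R h hD hΛ ih => simpa using ih

lemma PR.ne_nil {L R} (h : PR D Λ L R) : L ≠ [] := by cases h <;> simp

lemma PR.get_spec {L R} (h : PR D Λ L R) :
    ∀ i (h1 : i + 1 < L.length) (h2 : i < L.length) (h3 : i < R.length),
      D (L[i+1]'h1) (L[i]'h2) ∧ (R[i]'h3) ∈ Λ (L[i+1]'h1) (L[i]'h2) := by
  induction h with
  | single v => intro i h1 _ _; simp at h1
  | cons v u y L R h hD hΛ ih =>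
    intro i h1 h2 h3
    match i with
    | 0 => simpa using ⟨hD, hΛ⟩
    | Nat.succ j =>
      have h1' : j + 1 < (u :: L).length := by simpa using h1
      have h2' : j < (u :: L).length := by omega
      have h3' : j < R.length := by simpa using h3
      simpa using ih j h1' h2' h3'

/-- Invariant of the conflict-free DFS. -/
structure DFSInv (D : V → V → Prop) (C : SimpleGraph W) (Λ : V → V → Set W)
    (k m : ℕ) (L : List V) (R : List W) (Del : Finset V) (X : Finset W) : Prop where
  pr : PR D Λ L R
  nodup : L.Nodup
  nodupR : R.Nodup
  RX : ∀ w ∈ R, w ∈ X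
  Xind : ∀ a ∈ X, ∀ b ∈ X, ¬ C.Adj a b
  disj : ∀ v ∈ L, v ∉ Del
  hDel : ∀ u ∈ Del, ∀ v : V, v ∉ Del → v ∉ L → D u v →
    ∀ y ∈ Λ u v, y ∉ X → ∃ x ∈ X, C.Adj y x
  cDel : Del.card + 1 ≤ k
  cX : X.card + 1 ≤ Del.card + L.length
  cL : L.length ≤ m + 1

lemma card_bound {L : List V} {Del : Finset V} (hnd : L.Nodup)
    (hdisj : ∀ v ∈ L, v ∉ Del) : Del.card + L.length ≤ Fintype.card V := by
  have hd : Disjoint Del L.toFinset := by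
    rw [Finset.disjoint_right]
    intro v hv
    exact hdisj v (List.mem_toFinset.mp hv)
  calc Del.card + L.length = Del.card + L.toFinset.card := by
        rw [List.toFinset_card_of_nodup hnd]
    _ = (Del ∪ L.toFinset).card := (Finset.card_union_of_disjoint hd).symm
    _ ≤ Fintype.card V := Finset.card_le_univ _

lemma cfdfs_main (n k : ℕ) (hn : Fintype.card V = n) (hk : 1 ≤ k) (h2k : 2*k ≤ n)
    (hcon : ∀ S T : Finset V, Disjoint S T → S.card = k → T.card = k →
      ∀ X : Finset W, X.card ≤ n - 1 →
        ∃ u ∈ S, ∃ v ∈ T, D u v ∧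
          ∃ y ∈ Λ u v, y ∉ X ∧ ∀ x ∈ X, ¬ C.Adj y x) :
    ∀ N (L : List V) (R : List W) (Del : Finset V) (X : Finset W),
      2*(n - (Del.card + L.length)) + L.length ≤ N →
      DFSInv D C Λ k (n - 2*k) L R Del X →
      ∃ (L' : List V) (R' : List W), PR D Λ L' R' ∧ L'.Nodup ∧ R'.Nodup ∧
        (∀ a ∈ R', ∀ b ∈ R', ¬ C.Adj a b) ∧ L'.length = n - 2*k + 1 := by
  intro N
  induction N with
  | zero =>
    intro L R Del X hmeas inv
    exfalso
    have := inv.pr.ne_nil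
    have : 0 < L.length := List.length_pos_iff.mpr this
    omega
  | succ N ih =>
    intro L R Del X hmeas inv
    -- if the path is already long enough, we are done
    by_cases hlen : L.length = n - 2*k + 1
    · exact ⟨L, R, inv.pr, inv.nodup, inv.nodupR,
        fun a ha b hb => inv.Xind a (inv.RX a ha) b (inv.RX b hb), hlen⟩
    have hlen' : L.length ≤ n - 2*k := by have := inv.cL; omega
    obtain ⟨u, L₀, rfl⟩ : ∃ u L₀, L = u :: L₀ := by
      cases L with
      | nil => exact absurd rfl inv.pr.ne_nil
      | cons a l => exact ⟨a, l, rfl⟩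
    have hcb := card_bound inv.nodup inv.disj
    rw [hn] at hcb
    by_cases hext : ∃ v, v ∉ Del ∧ v ∉ (u :: L₀) ∧ D u v ∧
        ∃ y ∈ Λ u v, y ∉ X ∧ ∀ x ∈ X, ¬ C.Adj y x
    · -- PUSH
      obtain ⟨v, hvD, hvL, hDuv, y, hyΛ, hyX, hyc⟩ := hext
      have inv' : DFSInv D C Λ k (n - 2*k) (v :: u :: L₀) (y :: R) Del (insert y X) := by
        constructor
        · exact PR.cons v u y L₀ R inv.pr hDuv hyΛ
        · exact List.nodup_cons.mpr ⟨hvL, inv.nodup⟩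
        · exact List.nodup_cons.mpr ⟨fun hyR => hyX (inv.RX y hyR), inv.nodupR⟩
        · intro w hw
          rcases List.mem_cons.mp hw with h | h
          · exact h ▸ Finset.mem_insert_self y X
          · exact Finset.mem_insert_of_mem (inv.RX w h)
        · intro a ha b hb
          rcases Finset.mem_insert.mp ha with ha' | ha' <;>
            rcases Finset.mem_insert.mp hb with hb' | hb'
          · rw [ha', hb']; exact C.loopless.irrefl y
          · rw [ha']; exact hyc b hb'
          · rw [hb']; exact fun h => hyc a ha' h.symm
          · exact inv.Xind a ha' b hb'
        · intro w hw
          rcases List.mem_cons.mp hw with rfl | h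
          · exact hvD
          · exact inv.disj w h
        · intro u₀ hu₀ v₀ hv₀D hv₀L hD₀ y₀ hy₀Λ hy₀X
          have hv₀L' : v₀ ∉ (u :: L₀) := fun h => hv₀L (List.mem_cons_of_mem v h)
          have hy₀X' : y₀ ∉ X := fun h => hy₀X (Finset.mem_insert_of_mem h)
          obtain ⟨x, hx, hadj⟩ := inv.hDel u₀ hu₀ v₀ hv₀D hv₀L' hD₀ y₀ hy₀Λ hy₀X'
          exact ⟨x, Finset.mem_insert_of_mem hx, hadj⟩
        · exact inv.cDel
        · have h1 := Finset.card_insert_le y X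
          have h2 := inv.cX
          simp only [List.length_cons] at *
          omega
        · simp only [List.length_cons] at *
          omega
      have hcb' := card_bound inv'.nodup inv'.disj
      rw [hn] at hcb'
      refine ih _ _ _ _ ?_ inv'
      simp only [List.length_cons] at *
      omega
    · -- we will POP; first show Del can't reach size k
      have hDk : Del.card + 2 ≤ k := by
        by_contra hDk
        have hDk1 : Del.card + 1 = k := by have := inv.cDel; omega
        have huD : u ∉ Del := inv.disj u List.mem_cons_self
        set S : Finset V := insert u Del with hS
        have hScard : S.card = k := by
          rw [hS, Finset.card_insert_of_notMem huD]; omega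
        set U : Finset V := Finset.univ \ (Del ∪ (u :: L₀).toFinset) with hU
        have hUcard : k ≤ U.card := by
          have h1 : (Del ∪ (u :: L₀).toFinset).card = Del.card + (u :: L₀).length := by
            have hd : Disjoint Del (u :: L₀).toFinset := by
              rw [Finset.disjoint_right]
              intro v hv
              exact inv.disj v (List.mem_toFinset.mp hv)
            rw [Finset.card_union_of_disjoint hd, List.toFinset_card_of_nodup inv.nodup]
          have h2 : U.card = Fintype.card V - (Del ∪ (u :: L₀).toFinset).card := by
            rw [hU, Finset.card_sdiff_of_subset (Finset.subset_univ _), Finset.card_univ]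
          rw [hn] at h2
          simp only [List.length_cons] at *
          omega
        obtain ⟨T, hTU, hTcard⟩ := Finset.exists_subset_card_eq hUcard
        have hdisjST : Disjoint S T := by
          rw [Finset.disjoint_left]
          intro x hxS hxT
          have hxU := hTU hxT
          rw [hU, Finset.mem_sdiff] at hxU
          apply hxU.2
          rcases Finset.mem_insert.mp hxS with rfl | h
          · exact Finset.mem_union_right _ (List.mem_toFinset.mpr List.mem_cons_self)
          · exact Finset.mem_union_left _ h
        have hXcard : X.card ≤ n - 1 := by
          have := inv.cX
          simp only [List.length_cons] at *
          omega
        obtain ⟨u', hu'S, v, hvT, hDuv, y, hyΛ, hyX, hyc⟩ :=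
          hcon S T hdisjST hScard hTcard X hXcard
        have hvU := hTU hvT
        rw [hU, Finset.mem_sdiff] at hvU
        have hvD : v ∉ Del := fun h => hvU.2 (Finset.mem_union_left _ h)
        have hvL : v ∉ (u :: L₀) := fun h =>
          hvU.2 (Finset.mem_union_right _ (List.mem_toFinset.mpr h))
        rcases Finset.mem_insert.mp hu'S with rfl | hu'D
        · exact hext ⟨v, hvD, hvL, hDuv, y, hyΛ, hyX, hyc⟩
        · obtain ⟨x, hx, hadj⟩ := inv.hDel u' hu'D v hvD hvL hDuv y hyΛ hyX
          exact hyc x hx hadj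
      push_neg at hext
      have hext' : ∀ v, v ∉ Del → v ∉ (u :: L₀) → D u v →
          ∀ y ∈ Λ u v, y ∉ X → ∃ x ∈ X, C.Adj y x := by
        intro v hvD hvL hDuv y hyΛ hyX
        exact hext v hvD hvL hDuv y hyΛ hyX
      have huD : u ∉ Del := inv.disj u List.mem_cons_self
      cases L₀ with
      | nil =>
        -- POP the last vertex and RESTART
        have hR : R = [] := by
          have := inv.pr.length_eq; simp at this
          exact this
        subst hR
        have hfresh : ∃ w, w ∉ insert u Del := by
          by_contra hall
          push_neg at hall
          have : (insert u Del) = Finset.univ := Finset.eq_univ_iff_forall.mpr hall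
          have : (insert u Del).card = n := by rw [this, Finset.card_univ, hn]
          have := Finset.card_insert_le u Del
          omega
        obtain ⟨w, hw⟩ := hfresh
        have inv' : DFSInv D C Λ k (n - 2*k) [w] [] (insert u Del) X := by
          constructor
          · exact PR.single w
          · simp
          · simp
          · simp
          · exact inv.Xind
          · intro v hv
            simp only [List.mem_singleton] at hv
            subst hv
            exact hw
          · intro u₀ hu₀ v₀ hv₀D hv₀L hD₀ y₀ hy₀Λ hy₀X
            have hv₀u : v₀ ≠ u := fun h => hv₀D (h ▸ Finset.mem_insert_self u Del)
            have hv₀D' : v₀ ∉ Del := fun h => hv₀D (Finset.mem_insert_of_mem h)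
            have hv₀L' : v₀ ∉ [u] := by simpa using hv₀u
            rcases Finset.mem_insert.mp hu₀ with rfl | hu₀'
            · exact hext' v₀ hv₀D' hv₀L' hD₀ y₀ hy₀Λ hy₀X
            · exact inv.hDel u₀ hu₀' v₀ hv₀D' hv₀L' hD₀ y₀ hy₀Λ hy₀X
          · rw [Finset.card_insert_of_notMem huD]; omega
          · rw [Finset.card_insert_of_notMem huD]
            have := inv.cX
            simp only [List.length_singleton] at *
            omega
          · simp
        refine ih _ _ _ _ ?_ inv'
        rw [Finset.card_insert_of_notMem huD]
        simp only [List.length_singleton, List.length_cons, List.length_nil] at *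
        omega
      | cons u' L₁ =>
        -- POP
        obtain ⟨y₀, R₀, rfl, hpr₀⟩ : ∃ y₀ R₀, R = y₀ :: R₀ ∧ PR D Λ (u' :: L₁) R₀ := by
          cases inv.pr with
          | cons v uu yy LL RR h hD hΛ => exact ⟨yy, RR, rfl, h⟩
        have inv' : DFSInv D C Λ k (n - 2*k) (u' :: L₁) R₀ (insert u Del) X := by
          constructor
          · exact hpr₀
          · exact (List.nodup_cons.mp inv.nodup).2
          · exact (List.nodup_cons.mp inv.nodupR).2
          · intro w hw
            exact inv.RX w (List.mem_cons_of_mem _ hw)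
          · exact inv.Xind
          · intro v hv hvD
            rcases Finset.mem_insert.mp hvD with rfl | h
            · exact (List.nodup_cons.mp inv.nodup).1 hv
            · exact inv.disj v (List.mem_cons_of_mem _ hv) h
          · intro u₀ hu₀ v₀ hv₀D hv₀L hD₀ y₁ hy₁Λ hy₁X
            have hv₀u : v₀ ≠ u := fun h => hv₀D (h ▸ Finset.mem_insert_self u Del)
            have hv₀D' : v₀ ∉ Del := fun h => hv₀D (Finset.mem_insert_of_mem h)
            have hv₀L' : v₀ ∉ (u :: u' :: L₁) := by
              intro h
              rcases List.mem_cons.mp h with h | h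
              · exact hv₀u h
              · exact hv₀L h
            rcases Finset.mem_insert.mp hu₀ with rfl | hu₀'
            · exact hext' v₀ hv₀D' hv₀L' hD₀ y₁ hy₁Λ hy₁X
            · exact inv.hDel u₀ hu₀' v₀ hv₀D' hv₀L' hD₀ y₁ hy₁Λ hy₁X
          · rw [Finset.card_insert_of_notMem huD]; omega
          · rw [Finset.card_insert_of_notMem huD]
            have := inv.cX
            simp only [List.length_cons] at *
            omega
          · have := inv.cL
            simp only [List.length_cons] at *
            omega
        refine ih _ _ _ _ ?_ inv'
        rw [Finset.card_insert_of_notMem huD]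
        simp only [List.length_cons] at *
        omega

end CFDFS

/-- The conflict-free DFS lemma. `D` is a digraph on `n` vertices, `C` a
conflict graph and `Λ` assigns to each edge of `D` a set of possible
representatives in `V(C)`. If for any two disjoint `k`-sets `S, T` of vertices
of `D` and any set `X ⊆ V(C)` with `|X| ≤ n - 1` there is an edge `e` from `S`
to `T` and a representative `y ∈ Λ(e) \ X` having no conflict with `X`, then
`D` contains an admissible directed path with `n - 2k + 1` vertices: a
directed path together with distinct representatives of its edges forming an
independent set in `C`. -/
theorem stmt_1 {V W : Type*} [Fintype V] [DecidableEq V] [DecidableEq W]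
    (D : V → V → Prop) (C : SimpleGraph W) (Λ : V → V → Set W)
    (n k : ℕ) (hn : Fintype.card V = n) (hk : 1 ≤ k) (h2k : 2 * k ≤ n)
    (hcon : ∀ S T : Finset V, Disjoint S T → S.card = k → T.card = k →
      ∀ X : Finset W, X.card ≤ n - 1 →
        ∃ u ∈ S, ∃ v ∈ T, D u v ∧
          ∃ y ∈ Λ u v, y ∉ X ∧ ∀ x ∈ X, ¬ C.Adj y x) :
    ∃ f : Fin (n - 2 * k + 1) → V, ∃ y : Fin (n - 2 * k) → W,
      Function.Injective f ∧
      (∀ i : Fin (n - 2 * k), D (f i.castSucc) (f i.succ)) ∧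
      (∀ i : Fin (n - 2 * k), y i ∈ Λ (f i.castSucc) (f i.succ)) ∧
      Function.Injective y ∧
      (∀ i j : Fin (n - 2 * k), ¬ C.Adj (y i) (y j)) := by
  have hV : Nonempty V := by
    rw [← Fintype.card_pos_iff, hn]; omega
  obtain ⟨v₀⟩ := hV
  have inv0 : DFSInv D C Λ k (n - 2*k) [v₀] [] ∅ ∅ := by
    constructor
    · exact PR.single v₀
    · simp
    · simp
    · simp
    · simp
    · simp
    · simp
    · simp; omega
    · simp
    · simp
  obtain ⟨L, R, hpr, hnd, hndR, hnadj, hLen⟩ :=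
    cfdfs_main n k hn hk h2k hcon (2*n + 1) [v₀] [] ∅ ∅
      (by simp only [Finset.card_empty, List.length_singleton]; omega) inv0
  have hRlen : R.length = n - 2*k := by
    have := hpr.length_eq; omega
  set m := n - 2*k with hm
  have hm1 : L.length = m + 1 := hLen
  refine ⟨fun i => L[m - i.1]'(by omega),
          fun j => R[m - 1 - j.1]'(by have := j.isLt; omega), ?_, ?_, ?_, ?_, ?_⟩
  · intro i j hij
    have h1 : m - i.1 = m - j.1 := by
      have := (List.Nodup.getElem_inj_iff hnd).mp hij
      exact this
    have hi := i.isLt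
    have hj := j.isLt
    exact Fin.ext (by omega)
  · intro i
    have hi := i.isLt
    have hs := hpr.get_spec (m - 1 - i.1) (by omega) (by omega) (by omega)
    have e1 : m - i.castSucc.1 = m - 1 - i.1 + 1 := by
      simp only [Fin.coe_castSucc]; omega
    have e2 : m - i.succ.1 = m - 1 - i.1 := by
      simp only [Fin.val_succ]; omega
    simp only
    simp only [e1, e2]
    exact hs.1
  · intro i
    have hi := i.isLt
    have hs := hpr.get_spec (m - 1 - i.1) (by omega) (by omega) (by omega)
    have e1 : m - i.castSucc.1 = m - 1 - i.1 + 1 := by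
      simp only [Fin.coe_castSucc]; omega
    have e2 : m - i.succ.1 = m - 1 - i.1 := by
      simp only [Fin.val_succ]; omega
    simp only
    simp only [e1, e2]
    exact hs.2
  · intro i j hij
    have h1 : m - 1 - i.1 = m - 1 - j.1 := by
      have := (List.Nodup.getElem_inj_iff hndR).mp hij
      exact this
    have hi := i.isLt
    have hj := j.isLt
    exact Fin.ext (by omega)
  · intro i j
    exact hnadj _ (List.getElem_mem _) _ (List.getElem_mem _)
end

section
/- Let D be a digraph on n vertices such that between any two disjoint vertex sets of size k there is at least one directed edge from the first to the second. Then D contains a directed path on n − 2k + 1 vertices. -/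
open List

/-- DFS auxiliary lemma: from any valid DFS state we can extract a long path. -/
theorem dfs_aux {V : Type*} [Fintype V] [DecidableEq V] (D : V → V → Prop)
    (n k : ℕ) (hn : Fintype.card V = n) (hk : 1 ≤ k) (h2k : 2 * k ≤ n)
    (hedge : ∀ S T : Finset V, Disjoint S T → S.card = k → T.card = k →
      ∃ u ∈ S, ∃ v ∈ T, D u v) :
    ∀ m (F N : Finset V) (L : List V),
      2 * N.card + L.length ≤ m →
      F.card ≤ k →
      (∀ x : V, x ∈ F ∨ x ∈ N ∨ x ∈ L) →
      (∀ x ∈ F, x ∉ N) →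
      (∀ x ∈ L, x ∉ F) →
      (∀ x ∈ L, x ∉ N) →
      L.Nodup →
      L.Chain' (fun a b => D b a) →
      (∀ u ∈ F, ∀ v ∈ N, ¬ D u v) →
      ∃ P : List V, P.Nodup ∧ P.Chain' D ∧ n - 2 * k + 1 ≤ P.length := by
  intro m
  induction m with
  | zero =>
    intro F N L hm hcard hcover hFN hLF hLN hnd hch hnoedge
    -- measure 0 : N = ∅, L = [], so F = univ, contradiction with card
    have hN0 : N.card = 0 := by omega
    have hL0 : L.length = 0 := by omega
    exfalso
    have hFuniv : ∀ x : V, x ∈ F := by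
      intro x
      rcases hcover x with h | h | h
      · exact h
      · exact absurd (Finset.card_eq_zero.mp hN0 ▸ h) (Finset.notMem_empty x)
      · simp [List.length_eq_zero_iff.mp hL0] at h
    have : Fintype.card V ≤ F.card := by
      rw [← Finset.card_univ]
      exact Finset.card_le_card (fun x _ => hFuniv x)
    omega
  | succ m ih =>
    intro F N L hm hcard hcover hFN hLF hLN hnd hch hnoedge
    -- the partition cardinality identity
    have hd1 : Disjoint F N := Finset.disjoint_left.mpr hFN
    have hsum : F.card + N.card + L.length = n := by
      have h1 : (F ∪ N ∪ L.toFinset) = Finset.univ := by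
        apply Finset.eq_univ_iff_forall.mpr
        intro x
        simp only [Finset.mem_union, List.mem_toFinset]
        rcases hcover x with h | h | h
        · exact Or.inl (Or.inl h)
        · exact Or.inl (Or.inr h)
        · exact Or.inr h
      have hd2 : Disjoint (F ∪ N) L.toFinset := by
        rw [Finset.disjoint_right]
        intro a ha
        simp only [Finset.mem_union]
        rw [List.mem_toFinset] at ha
        push_neg
        exact ⟨hLF a ha, hLN a ha⟩
      have := congrArg Finset.card h1
      rw [Finset.card_union_of_disjoint hd2, Finset.card_union_of_disjoint hd1,
        List.toFinset_card_of_nodup hnd, Finset.card_univ, hn] at this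
      exact this
    by_cases hFk : F.card = k
    · -- terminal case: N is small, L is the long path
      have hNk : N.card < k := by
        by_contra hge
        push_neg at hge
        obtain ⟨T, hTN, hTcard⟩ := Finset.exists_subset_card_eq hge
        obtain ⟨u, huF, v, hvT, hD⟩ :=
          hedge F T (Finset.disjoint_left.mpr fun a ha hb => hFN a ha (hTN hb)) hFk hTcard
        exact hnoedge u huF v (hTN hvT) hD
      refine ⟨L.reverse, List.nodup_reverse.mpr hnd, ?_, ?_⟩
      · rw [List.Chain', List.isChain_reverse]
        exact hch
      · rw [List.length_reverse]
        omega
    · have hFlt : F.card < k := lt_of_le_of_ne hcard hFk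
      match L, hnd, hch with
      | [], _, _ =>
        -- stack empty: N must be nonempty, restart from some v ∈ N
        have hNpos : 0 < N.card := by
          by_contra h
          push_neg at h
          simp only [List.length_nil] at hsum
          omega
        obtain ⟨v, hv⟩ := Finset.card_pos.mp hNpos
        apply ih F (N.erase v) [v]
        · have : (N.erase v).card = N.card - 1 := Finset.card_erase_of_mem hv
          simp only [List.length_cons, List.length_nil]
          simp only [List.length_nil] at hm
          omega
        · exact hcard
        · intro x
          rcases hcover x with h | h | h
          · exact Or.inl h
          · by_cases hxv : x = v
            · exact Or.inr (Or.inr (by simp [hxv]))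
            · exact Or.inr (Or.inl (Finset.mem_erase.mpr ⟨hxv, h⟩))
          · simp at h
        · intro x hx hx'
          exact hFN x hx (Finset.mem_of_mem_erase hx')
        · intro x hx
          simp only [List.mem_singleton] at hx
          subst hx
          exact fun hxF => hFN x hxF hv
        · intro x hx
          simp only [List.mem_singleton] at hx
          subst hx
          exact Finset.notMem_erase x N
        · exact List.nodup_singleton v
        · exact List.isChain_singleton v
        · intro u hu w hw
          exact hnoedge u hu w (Finset.mem_of_mem_erase hw)
      | top :: rest, hnd, hch =>
        by_cases hnb : ∃ v ∈ N, D top v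
        · -- push case
          obtain ⟨v, hvN, hDv⟩ := hnb
          apply ih F (N.erase v) (v :: top :: rest)
          · have : (N.erase v).card = N.card - 1 := Finset.card_erase_of_mem hvN
            have hNpos : 0 < N.card := Finset.card_pos.mpr ⟨v, hvN⟩
            simp only [List.length_cons] at hm ⊢
            omega
          · exact hcard
          · intro x
            rcases hcover x with h | h | h
            · exact Or.inl h
            · by_cases hxv : x = v
              · exact Or.inr (Or.inr (by simp [hxv]))
              · exact Or.inr (Or.inl (Finset.mem_erase.mpr ⟨hxv, h⟩))
            · exact Or.inr (Or.inr (List.mem_cons_of_mem v h))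
          · intro x hx hx'
            exact hFN x hx (Finset.mem_of_mem_erase hx')
          · intro x hx
            rcases List.mem_cons.mp hx with h | h
            · subst h; exact fun hxF => hFN x hxF hvN
            · exact hLF x h
          · intro x hx
            rcases List.mem_cons.mp hx with h | h
            · subst h; exact Finset.notMem_erase x N
            · exact fun hx' => hLN x h (Finset.mem_of_mem_erase hx')
          · refine List.nodup_cons.mpr ⟨?_, hnd⟩
            intro hvL
            exact hLN v hvL hvN
          · exact List.isChain_cons_cons.mpr ⟨hDv, hch⟩
          · intro u hu w hw
            exact hnoedge u hu w (Finset.mem_of_mem_erase hw)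
        · -- pop case
          push_neg at hnb
          have htopF : top ∉ F := hLF top (List.mem_cons_self)
          apply ih (insert top F) N rest
          · simp only [List.length_cons] at hm
            omega
          · rw [Finset.card_insert_of_notMem htopF]
            omega
          · intro x
            rcases hcover x with h | h | h
            · exact Or.inl (Finset.mem_insert_of_mem h)
            · exact Or.inr (Or.inl h)
            · rcases List.mem_cons.mp h with h | h
              · exact Or.inl (h ▸ Finset.mem_insert_self top F)
              · exact Or.inr (Or.inr h)
          · intro x hx
            rcases Finset.mem_insert.mp hx with h | h
            · subst h; exact hLN x (List.mem_cons_self)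
            · exact hFN x h
          · intro x hx hx'
            rcases Finset.mem_insert.mp hx' with h | h
            · subst h; exact (List.nodup_cons.mp hnd).1 hx
            · exact hLF x (List.mem_cons_of_mem top hx) h
          · intro x hx
            exact hLN x (List.mem_cons_of_mem top hx)
          · exact (List.nodup_cons.mp hnd).2
          · exact (List.isChain_cons.mp hch).2
          · intro u hu w hw
            rcases Finset.mem_insert.mp hu with h | h
            · subst h; exact hnb w hw
            · exact hnoedge u h w hw

/-- If in a digraph `D` on `n` vertices every two disjoint vertex sets of size
`k` are joined by a directed edge from the first to the second, then `D`
contains a directed path on `n - 2k + 1` vertices. -/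
theorem stmt_10 {V : Type*} [Fintype V] [DecidableEq V] (D : V → V → Prop)
    (n k : ℕ) (hn : Fintype.card V = n) (hk : 1 ≤ k) (h2k : 2 * k ≤ n)
    (hedge : ∀ S T : Finset V, Disjoint S T → S.card = k → T.card = k →
      ∃ u ∈ S, ∃ v ∈ T, D u v) :
    ∃ f : Fin (n - 2 * k + 1) → V, Function.Injective f ∧
      ∀ i : Fin (n - 2 * k), D (f i.castSucc) (f i.succ) := by
  obtain ⟨P, hPnd, hPch, hPlen⟩ :=
    dfs_aux D n k hn hk h2k hedge (2 * n) ∅ Finset.univ []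
      (by simp [hn]) (by simp) (by simp) (by simp) (by simp) (by simp)
      List.nodup_nil List.isChain_nil (by simp)
  have hlen : ∀ i : ℕ, i < n - 2 * k + 1 → i < P.length := fun i hi => by omega
  refine ⟨fun i => P.get ⟨i.val, hlen i.val i.isLt⟩, ?_, ?_⟩
  · intro i j hij
    apply Fin.ext
    simpa using List.nodup_iff_injective_get.mp hPnd hij
  · intro i
    have h1 : (i : ℕ) < P.length - 1 := by
      have := i.isLt
      omega
    have := List.isChain_iff_getElem.mp hPch i.val (by omega)
    simpa using this
end

section
/- For all real numbers n ≥ 2, d ≥ 2 and all integers N with n/d² ≤ N ≤ n/2, we have ∑_{j=0}^{N−1} C(n, j) ≤ exp(4·N·log d). -/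
/-- For `n ≥ 2`, real `d ≥ 2` and `n/d² ≤ N ≤ n/2`,
`∑_{j=0}^{N-1} C(n,j) ≤ exp (4 N log d)`. -/
theorem stmt_11 (n N : ℕ) (d : ℝ) (hn : 2 ≤ n) (hd : 2 ≤ d)
    (hN1 : (n : ℝ) / d ^ 2 ≤ N) (hN2 : (N : ℝ) ≤ n / 2) :
    (∑ j ∈ Finset.range N, (n.choose j : ℝ)) ≤ Real.exp (4 * N * Real.log d) := by
  rcases Nat.eq_zero_or_pos N with h0 | hNpos
  · subst h0; simpa using (Real.exp_pos _).le
  have hn0 : (0:ℝ) < n := by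
    have : (2:ℝ) ≤ n := by exact_mod_cast hn
    linarith
  have hN0 : (0:ℝ) < N := by exact_mod_cast hNpos
  set x : ℝ := (N : ℝ) / n with hxdef
  have hx0 : 0 < x := div_pos hN0 hn0
  have hx1 : x ≤ 1 := by
    rw [div_le_one hn0]; linarith
  have hNn : N ≤ n := by
    have : (N:ℝ) ≤ n := by linarith
    exact_mod_cast this
  have key : (∑ j ∈ Finset.range N, (n.choose j : ℝ)) * x ^ N ≤ Real.exp N := by
    calc (∑ j ∈ Finset.range N, (n.choose j : ℝ)) * x ^ N
        = ∑ j ∈ Finset.range N, (n.choose j : ℝ) * x ^ N := by rw [Finset.sum_mul]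
      _ ≤ ∑ j ∈ Finset.range N, (n.choose j : ℝ) * x ^ j := by
          apply Finset.sum_le_sum
          intro j hj
          exact mul_le_mul_of_nonneg_left
            (pow_le_pow_of_le_one hx0.le hx1 (le_of_lt (Finset.mem_range.mp hj)))
            (by positivity)
      _ ≤ ∑ j ∈ Finset.range (n+1), (n.choose j : ℝ) * x ^ j := by
          apply Finset.sum_le_sum_of_subset_of_nonneg
          · exact Finset.range_subset_range.mpr (by omega)
          · intro j _ _; positivity
      _ = (x + 1) ^ n := by
          rw [add_pow]
          apply Finset.sum_congr rfl
          intro j hj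
          ring
      _ ≤ Real.exp x ^ n := by
          apply pow_le_pow_left₀ (by positivity)
          linarith [Real.add_one_le_exp x]
      _ = Real.exp (x * n) := by rw [mul_comm, Real.exp_nat_mul]
      _ = Real.exp N := by rw [hxdef, div_mul_cancel₀ _ hn0.ne']
  have hxpow : (0:ℝ) < x ^ N := by positivity
  have hA : (∑ j ∈ Finset.range N, (n.choose j : ℝ)) ≤ Real.exp N * ((n:ℝ)/N) ^ N := by
    rw [← le_div_iff₀ hxpow] at key
    have : Real.exp N / x ^ N = Real.exp N * ((n:ℝ)/N) ^ N := by
      rw [div_eq_mul_inv, ← inv_pow, hxdef, inv_div]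
    rw [this] at key
    exact key
  have hd0 : (0:ℝ) < d := by linarith
  have hnd : (n:ℝ)/N ≤ d ^ 2 := by
    rw [div_le_iff₀ hN0]
    have := (div_le_iff₀ (by positivity : (0:ℝ) < d^2)).mp hN1
    linarith
  have hpow : ((n:ℝ)/N) ^ N ≤ (d ^ 2) ^ N :=
    pow_le_pow_left₀ (by positivity) hnd N
  have hd2 : (d ^ 2) ^ N = Real.exp (2 * N * Real.log d) := by
    rw [← Real.exp_log (show (0:ℝ) < d^2 by positivity), ← Real.exp_nat_mul,
      Real.log_pow]
    push_cast
    ring_nf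
  have hlogd : (1:ℝ)/2 ≤ Real.log d := by
    have h2 : Real.log 2 ≤ Real.log d := Real.log_le_log (by norm_num) hd
    nlinarith [Real.log_two_gt_d9]
  calc (∑ j ∈ Finset.range N, (n.choose j : ℝ))
      ≤ Real.exp N * ((n:ℝ)/N) ^ N := hA
    _ ≤ Real.exp N * Real.exp (2 * N * Real.log d) := by
        rw [← hd2]
        exact mul_le_mul_of_nonneg_left hpow (Real.exp_nonneg _)
    _ = Real.exp (N + 2 * N * Real.log d) := (Real.exp_add _ _).symm
    _ ≤ Real.exp (4 * N * Real.log d) := by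
        apply Real.exp_le_exp.mpr
        nlinarith
end

section
/- Let G be a graph and let F be an induced linear forest in G whose components P₁, …, P_N are vertex-disjoint induced paths, each given a direction. Suppose a₁, …, a_{r} are distinct vertices outside V(F) forming an independent set in G, such that for each i, the vertex a_i has exactly one neighbour in the end-segment of P_i, exactly one neighbour in the start-segment of P_{i+1}, and no other neighbours in V(F). Then G contains an induced path containing, for each i, the subpath of P_i between its first neighbour of a_{i−1} and its neighbour of a_i (suitably truncated), connected through the vertices a_i; in particular, if each P_i has L vertices and each end-segment has m vertices, G contains an induced path with at least N(L − 2m) vertices. -/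
/-- A list of vertices forming an induced path in `G`. -/
def IsIP {V : Type*} (G : SimpleGraph V) (l : List V) : Prop :=
  l.Nodup ∧ ∀ (x y : ℕ) (hx : x < l.length) (hy : y < l.length),
    G.Adj l[x] l[y] ↔ (x + 1 = y ∨ y + 1 = x)

lemma isIP_singleton {V : Type*} (G : SimpleGraph V) (v : V) : IsIP G [v] := by
  refine ⟨List.nodup_singleton v, ?_⟩
  intro x y hx hy
  simp at hx hy
  subst hx; subst hy
  simp

lemma isIP_map_range {V : Type*} (G : SimpleGraph V) (f : ℕ → V) (n : ℕ)
    (hinj : ∀ x < n, ∀ y < n, f x = f y → x = y)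
    (hadj : ∀ x < n, ∀ y < n, (G.Adj (f x) (f y) ↔ (x + 1 = y ∨ y + 1 = x))) :
    IsIP G ((List.range n).map f) := by
  constructor
  · rw [List.nodup_map_iff_inj_on (List.nodup_range (n := n))]
    intro x hx y hy
    simp at hx hy
    exact hinj x hx y hy
  · intro x y hx hy
    simp at hx hy
    rw [List.getElem_map, List.getElem_map, List.getElem_range, List.getElem_range]
    exact hadj x hx y hy

lemma IsIP.glue {V : Type*} {G : SimpleGraph V} {l₁ l₂ : List V}
    (h₁ : IsIP G l₁) (h₂ : IsIP G l₂)
    (hn₁ : l₁ ≠ []) (hn₂ : l₂ ≠ [])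
    (hdisj : ∀ x ∈ l₁, x ∉ l₂)
    (hcross : ∀ x ∈ l₁, ∀ y ∈ l₂,
      (G.Adj x y ↔ (x = l₁.getLast hn₁ ∧ y = l₂.head hn₂))) :
    IsIP G (l₁ ++ l₂) := by
  have hlen₁ : 0 < l₁.length := List.length_pos_iff.mpr hn₁
  have hlen₂ : 0 < l₂.length := List.length_pos_iff.mpr hn₂
  have hlast : l₁.getLast hn₁ = l₁[l₁.length - 1] := List.getLast_eq_getElem hn₁
  have hhead : l₂.head hn₂ = l₂[0] := List.head_eq_getElem hn₂
  constructor
  · rw [List.nodup_append]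
    exact ⟨h₁.1, h₂.1, fun x hx y hy h => hdisj x hx (h ▸ hy)⟩
  · intro x y hx hy
    rw [List.length_append] at hx hy
    rcases lt_or_ge x l₁.length with hx1 | hx1 <;>
      rcases lt_or_ge y l₁.length with hy1 | hy1
    · rw [List.getElem_append_left hx1, List.getElem_append_left hy1]
      exact h₁.2 x y hx1 hy1
    · rw [List.getElem_append_left hx1, List.getElem_append_right hy1]
      rw [hcross _ (List.getElem_mem hx1) _ (List.getElem_mem (by omega))]
      rw [hlast, hhead, h₁.1.getElem_inj_iff, h₂.1.getElem_inj_iff]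
      omega
    · rw [List.getElem_append_right hx1, List.getElem_append_left hy1]
      rw [G.adj_comm]
      rw [hcross _ (List.getElem_mem hy1) _ (List.getElem_mem (by omega))]
      rw [hlast, hhead, h₁.1.getElem_inj_iff, h₂.1.getElem_inj_iff]
      omega
    · rw [List.getElem_append_right hx1, List.getElem_append_right hy1]
      rw [h₂.2 _ _ (by omega) (by omega)]
      omega

/-- Concatenation of blocks `b 0, b 1, ...` with connector vertices `c k` in between. -/
def chainList {V : Type*} (b : ℕ → List V) (c : ℕ → V) : ℕ → List V
  | 0 => b 0
  | k + 1 => chainList b c k ++ (c k :: b (k + 1))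

/-- Connecting an induced linear forest into a long induced path. The forest
consists of `N` vertex-disjoint directed induced paths `P i`, each with `L`
vertices, inducing exactly the path edges in `G`. The distinct vertices `a i`
(for `i < N - 1`) lie outside the forest, form an independent set, and each
`a i` has exactly one neighbour in the last `m` vertices of `P i`, exactly one
neighbour in the first `m` vertices of `P (i+1)`, and no other neighbours in
the forest. Then `G` contains an induced path with at least `N(L - 2m)`
vertices. -/
theorem stmt_15 {V : Type*} [Fintype V] [DecidableEq V] (G : SimpleGraph V)
    (N L m : ℕ) (hN : 2 ≤ N) (hm : 1 ≤ m) (hL : 2 * m < L)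
    (P : Fin N → Fin L → V)
    (hPinj : Function.Injective (fun q : Fin N × Fin L => P q.1 q.2))
    (hPind : ∀ (i i' : Fin N) (j j' : Fin L),
      G.Adj (P i j) (P i' j') ↔
        i = i' ∧ ((j : ℕ) + 1 = (j' : ℕ) ∨ (j' : ℕ) + 1 = (j : ℕ)))
    (a : Fin (N - 1) → V) (hainj : Function.Injective a)
    (haout : ∀ i (i' : Fin N) (j : Fin L), a i ≠ P i' j)
    (haind : ∀ i i', ¬ G.Adj (a i) (a i'))
    (hend : ∀ i : Fin (N - 1),
      ∃! j : Fin L, L - m ≤ (j : ℕ) ∧ G.Adj (a i) (P ((⟨(i : ℕ), by have := i.isLt; omega⟩ : Fin N)) j))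
    (hstart : ∀ i : Fin (N - 1),
      ∃! j : Fin L, (j : ℕ) < m ∧ G.Adj (a i) (P ((⟨(i : ℕ) + 1, by have := i.isLt; omega⟩ : Fin N)) j))
    (hnoother : ∀ (i : Fin (N - 1)) (i' : Fin N) (j : Fin L),
      G.Adj (a i) (P i' j) →
        (i' = (⟨(i : ℕ), by have := i.isLt; omega⟩ : Fin N) ∧ L - m ≤ (j : ℕ)) ∨
        (i' = (⟨(i : ℕ) + 1, by have := i.isLt; omega⟩ : Fin N) ∧ (j : ℕ) < m)) :
    ∃ r : ℕ, N * (L - 2 * m) ≤ r ∧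
      ∃ f : Fin r → V, Function.Injective f ∧
        ∀ x y : Fin r, G.Adj (f x) (f y) ↔
          ((x : ℕ) + 1 = (y : ℕ) ∨ (y : ℕ) + 1 = (x : ℕ)) := by
  have hL0 : 0 < L := by omega
  -- ℕ-indexed version of P
  obtain ⟨Pn, hPn⟩ : ∃ Pn : Fin N → ℕ → V, ∀ (i : Fin N) (j : ℕ) (hj : j < L),
      Pn i j = P i ⟨j, hj⟩ :=
    ⟨fun i j => P i ⟨j % L, Nat.mod_lt _ hL0⟩, by
      intro i j hj
      simp [Nat.mod_eq_of_lt hj]⟩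
  have hPn_inj : ∀ (i i' : Fin N) (j j' : ℕ), j < L → j' < L →
      (Pn i j = Pn i' j' ↔ (i = i' ∧ j = j')) := by
    intro i i' j j' hj hj'
    rw [hPn i j hj, hPn i' j' hj']
    constructor
    · intro h
      have h2 := hPinj (a₁ := (i, ⟨j, hj⟩)) (a₂ := (i', ⟨j', hj'⟩)) h
      simp [Prod.ext_iff, Fin.ext_iff] at h2
      exact ⟨Fin.ext h2.1, h2.2⟩
    · rintro ⟨rfl, rfl⟩; rfl
  have hPn_adj : ∀ (i i' : Fin N) (j j' : ℕ), j < L → j' < L →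
      (G.Adj (Pn i j) (Pn i' j') ↔ (i = i' ∧ (j + 1 = j' ∨ j' + 1 = j))) := by
    intro i i' j j' hj hj'
    rw [hPn i j hj, hPn i' j' hj', hPind]
  -- the chosen neighbours of `a i`
  choose e he using hend
  choose s hs using hstart
  -- facts about `e`, `s` in `Pn` form
  have heP : ∀ (i : Fin (N - 1)) (iN : Fin N), (iN : ℕ) = (i : ℕ) →
      (L - m ≤ (e i : ℕ) ∧ G.Adj (a i) (Pn iN (e i)) ∧
        ∀ j, (hj : j < L) → L - m ≤ j → G.Adj (a i) (Pn iN j) → j = (e i : ℕ)) := by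
    intro i iN h
    have hiN : iN = ⟨(i : ℕ), Nat.lt_of_lt_of_le i.isLt (Nat.sub_le N 1)⟩ := Fin.ext h
    subst hiN
    obtain ⟨⟨h1, h2⟩, h3⟩ := he i
    refine ⟨h1, ?_, ?_⟩
    · rw [hPn _ _ (e i).isLt]
      simpa using h2
    · intro j hj hle hadj
      rw [hPn _ _ hj] at hadj
      have := h3 ⟨j, hj⟩ ⟨hle, hadj⟩
      exact congrArg Fin.val this
  have hsP : ∀ (i : Fin (N - 1)) (iN : Fin N), (iN : ℕ) = (i : ℕ) + 1 →
      ((s i : ℕ) < m ∧ G.Adj (a i) (Pn iN (s i)) ∧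
        ∀ j, (hj : j < L) → j < m → G.Adj (a i) (Pn iN j) → j = (s i : ℕ)) := by
    intro i iN h
    have hiN : iN = ⟨(i : ℕ) + 1, Nat.add_lt_of_lt_sub i.isLt⟩ := Fin.ext h
    subst hiN
    obtain ⟨⟨h1, h2⟩, h3⟩ := hs i
    refine ⟨h1, ?_, ?_⟩
    · rw [hPn _ _ (s i).isLt]
      simpa using h2
    · intro j hj hlt hadj
      rw [hPn _ _ hj] at hadj
      have := h3 ⟨j, hj⟩ ⟨hlt, hadj⟩
      exact congrArg Fin.val this
  have hnoP : ∀ (i : Fin (N - 1)) (i' : Fin N) (j : ℕ), (hj : j < L) →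
      G.Adj (a i) (Pn i' j) →
      ((i' : ℕ) = (i : ℕ) ∧ L - m ≤ j) ∨ ((i' : ℕ) = (i : ℕ) + 1 ∧ j < m) := by
    intro i i' j hj hadj
    rw [hPn _ _ hj] at hadj
    rcases hnoother i i' ⟨j, hj⟩ hadj with ⟨h1, h2⟩ | ⟨h1, h2⟩
    · left; exact ⟨congrArg Fin.val h1, h2⟩
    · right; exact ⟨congrArg Fin.val h1, h2⟩
  have haoutn : ∀ (i : Fin (N - 1)) (i' : Fin N) (j : ℕ), j < L → a i ≠ Pn i' j := by
    intro i i' j hj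
    rw [hPn _ _ hj]
    exact haout i i' _
  -- start and end indices of the used segment of each path
  obtain ⟨σ, hσ⟩ : ∃ σ : Fin N → ℕ, ∀ i : Fin N,
      σ i < m ∧ ((i : ℕ) = 0 → σ i = 0) ∧
      ∀ i' : Fin (N - 1), (i : ℕ) = (i' : ℕ) + 1 → σ i = (s i' : ℕ) := by
    refine ⟨fun i => if h : (i : ℕ) = 0 then 0 else
      (s ⟨(i : ℕ) - 1, by have := i.isLt; omega⟩ : ℕ), fun i => ⟨?_, ?_, ?_⟩⟩
    · by_cases h : (i : ℕ) = 0
      · simp [h]; omega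
      · simp only [dif_neg h]
        exact (hs _).1.1
    · intro h; simp [h]
    · intro i' h
      have hne : (i : ℕ) ≠ 0 := by omega
      simp only [dif_neg hne]
      congr 1
      exact Fin.ext (by simp [h])
  obtain ⟨τ, hτ⟩ : ∃ τ : Fin N → ℕ, ∀ i : Fin N,
      (L - m ≤ τ i ∧ τ i < L) ∧ ((i : ℕ) = N - 1 → τ i = L - 1) ∧
      ∀ i' : Fin (N - 1), (i : ℕ) = (i' : ℕ) → τ i = (e i' : ℕ) := by
    refine ⟨fun i => if h : (i : ℕ) = N - 1 then L - 1 else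
      (e ⟨(i : ℕ), by have := i.isLt; omega⟩ : ℕ), fun i => ⟨⟨?_, ?_⟩, ?_, ?_⟩⟩
    · by_cases h : (i : ℕ) = N - 1
      · simp [h]; omega
      · simp only [dif_neg h]
        exact (he _).1.1
    · by_cases h : (i : ℕ) = N - 1
      · simp [h]; omega
      · simp only [dif_neg h]
        exact (e _).isLt
    · intro h; simp [h]
    · intro i' h
      have hne : (i : ℕ) ≠ N - 1 := by have := i'.isLt; omega
      simp only [dif_neg hne]
      congr 1
      exact Fin.ext (by simp [h])
  have hστ : ∀ i : Fin N, σ i < τ i ∧ τ i < L := by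
    intro i
    have h1 := (hσ i).1
    have h2 := (hτ i).1
    omega
  -- the blocks
  obtain ⟨blk, hblk⟩ : ∃ blk : Fin N → List V, ∀ i : Fin N,
      blk i = (List.range (τ i + 1 - σ i)).map (fun k => Pn i (σ i + k)) :=
    ⟨_, fun _ => rfl⟩
  have hblk_len : ∀ i, (blk i).length = τ i + 1 - σ i := by
    intro i; rw [hblk]; simp
  have hblk_ne : ∀ i, blk i ≠ [] := by
    intro i
    have := hστ i
    exact List.ne_nil_of_length_pos (by rw [hblk_len]; omega)
  have hblk_mem : ∀ (i : Fin N) (x : V), x ∈ blk i ↔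
      ∃ j, σ i ≤ j ∧ j ≤ τ i ∧ x = Pn i j := by
    intro i x
    rw [hblk]
    simp only [List.mem_map, List.mem_range]
    constructor
    · rintro ⟨k, hk, rfl⟩
      exact ⟨σ i + k, by omega, by omega, rfl⟩
    · rintro ⟨j, h1, h2, rfl⟩
      exact ⟨j - σ i, by omega, by congr 1; omega⟩
  have hblk_IP : ∀ i : Fin N, IsIP G (blk i) := by
    intro i
    have hi := hστ i
    rw [hblk]
    apply isIP_map_range
    · intro x hx y hy hxy
      have := (hPn_inj i i (σ i + x) (σ i + y) (by omega) (by omega)).mp hxy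
      omega
    · intro x hx y hy
      rw [hPn_adj i i _ _ (by omega) (by omega)]
      simp only [true_and]
      omega
  have hblk_head : ∀ i : Fin N, (blk i).head (hblk_ne i) = Pn i (σ i) := by
    intro i
    have hi := hστ i
    rw [List.head_eq_getElem]
    simp only [hblk]
    rw [List.getElem_map, List.getElem_range]
    simp
  have hblk_last : ∀ i : Fin N, (blk i).getLast (hblk_ne i) = Pn i (τ i) := by
    intro i
    have hi := hστ i
    rw [List.getLast_eq_getElem]
    simp only [hblk]
    rw [List.getElem_map, List.getElem_range]
    simp only [List.length_map, List.length_range]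
    congr 1
    omega
  have hlb : ∀ i : Fin N, L - 2 * m ≤ τ i + 1 - σ i := by
    intro i
    have h1 := (hσ i).1
    have h2 := (hτ i).1
    omega
  -- the chain of blocks joined by the connector vertices
  obtain ⟨ch, hch0, hchS⟩ : ∃ ch : ℕ → List V,
      ch 0 = blk ⟨0, by omega⟩ ∧
      ∀ k, (hk : k + 1 < N) → ch (k + 1) =
        ch k ++ (a ⟨k, by omega⟩ :: blk ⟨k + 1, hk⟩) := by
    refine ⟨chainList (fun k => if h : k < N then blk ⟨k, h⟩ else [])
      (fun k => if h : k < N - 1 then a ⟨k, h⟩ else a ⟨0, by omega⟩), ?_, ?_⟩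
    · simp only [chainList]
      rw [dif_pos (by omega : 0 < N)]
    · intro k hk
      simp only [chainList]
      rw [dif_pos (show k < N - 1 by omega), dif_pos hk]
  -- the main invariant
  have key : ∀ k, (hk : k < N) →
      (ch k ≠ []) ∧ IsIP G (ch k) ∧
      (∀ hne : ch k ≠ [], (ch k).getLast hne = Pn ⟨k, hk⟩ (τ ⟨k, hk⟩)) ∧
      (∀ x ∈ ch k, (∃ i : Fin N, (i : ℕ) ≤ k ∧ ∃ j, σ i ≤ j ∧ j ≤ τ i ∧ x = Pn i j) ∨
        (∃ i : Fin (N - 1), (i : ℕ) < k ∧ x = a i)) ∧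
      (k + 1) * (L - 2 * m) ≤ (ch k).length := by
    intro k
    induction k with
    | zero =>
      intro hk
      rw [hch0]
      refine ⟨hblk_ne _, hblk_IP _, ?_, ?_, ?_⟩
      · intro hne
        exact hblk_last _
      · intro x hx
        obtain ⟨j, hj1, hj2, rfl⟩ := (hblk_mem _ x).mp hx
        exact Or.inl ⟨⟨0, hk⟩, Nat.le_refl 0, j, hj1, hj2, rfl⟩
      · rw [hblk_len]
        exact le_trans (by omega) (hlb _)
    | succ k ih =>
      intro hk
      obtain ⟨hne, hIP, hlast, hmem, hlen⟩ := ih (by omega)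
      have hkN1 : k < N - 1 := by omega
      -- abbreviations
      have hτk : τ ⟨k, by omega⟩ = (e ⟨k, hkN1⟩ : ℕ) := (hτ _).2.2 ⟨k, hkN1⟩ rfl
      have hσ1 : σ ⟨k + 1, hk⟩ = (s ⟨k, hkN1⟩ : ℕ) := (hσ _).2.2 ⟨k, hkN1⟩ rfl
      have hadj_e : G.Adj (a ⟨k, hkN1⟩) (Pn ⟨k, by omega⟩ (τ ⟨k, by omega⟩)) := by
        rw [hτk]; exact (heP ⟨k, hkN1⟩ ⟨k, by omega⟩ rfl).2.1
      have hadj_s : G.Adj (a ⟨k, hkN1⟩) (Pn ⟨k + 1, hk⟩ (σ ⟨k + 1, hk⟩)) := by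
        rw [hσ1]; exact (hsP ⟨k, hkN1⟩ ⟨k + 1, hk⟩ rfl).2.1
      -- adjacency of `a k` with the vertices of the earlier part of the chain
      have hAe : ∀ (i : Fin N) (j : ℕ), (i : ℕ) ≤ k → σ i ≤ j → j ≤ τ i →
          (G.Adj (a ⟨k, hkN1⟩) (Pn i j) ↔ (i = ⟨k, by omega⟩ ∧ j = τ ⟨k, by omega⟩)) := by
        intro i j hik hj1 hj2
        have hjL : j < L := lt_of_le_of_lt hj2 (hστ i).2
        constructor
        · intro hadj
          rcases hnoP ⟨k, hkN1⟩ i j hjL hadj with ⟨h1, h2⟩ | ⟨h1, h2⟩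
          · have h1' : (i : ℕ) = k := h1
            have hi : i = ⟨k, hkN1.trans_le (Nat.sub_le N 1)⟩ := Fin.ext h1'
            rw [hi] at hadj
            refine ⟨Fin.ext h1', ?_⟩
            have := (heP ⟨k, hkN1⟩ ⟨k, hkN1.trans_le (Nat.sub_le N 1)⟩ rfl).2.2 j hjL h2 hadj
            rw [hτk]; exact this
          · have h1' : (i : ℕ) = k + 1 := h1
            omega
        · rintro ⟨rfl, rfl⟩; exact hadj_e
      -- adjacency of `a k` with the vertices of the new block
      have hAs : ∀ (j : ℕ), σ ⟨k + 1, hk⟩ ≤ j → j ≤ τ ⟨k + 1, hk⟩ →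
          (G.Adj (a ⟨k, hkN1⟩) (Pn ⟨k + 1, hk⟩ j) ↔ j = σ ⟨k + 1, hk⟩) := by
        intro j hj1 hj2
        have hjL : j < L := lt_of_le_of_lt hj2 (hστ _).2
        constructor
        · intro hadj
          rcases hnoP ⟨k, hkN1⟩ ⟨k + 1, hk⟩ j hjL hadj with ⟨h1, h2⟩ | ⟨h1, h2⟩
          · have h1' : k + 1 = k := h1
            omega
          · have := (hsP ⟨k, hkN1⟩ ⟨k + 1, hk⟩ rfl).2.2 j hjL h2 hadj
            rw [hσ1]; exact this
        · rintro rfl; exact hadj_s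
      -- older connector vertices are not adjacent to the new block
      have hA_none : ∀ (i : Fin (N - 1)), (i : ℕ) < k → ∀ (j : ℕ), j < L →
          ¬ G.Adj (a i) (Pn ⟨k + 1, hk⟩ j) := by
        intro i hik j hjL hadj
        rcases hnoP i ⟨k + 1, hk⟩ j hjL hadj with ⟨h1, _⟩ | ⟨h1, _⟩
        · have h1' : k + 1 = (i : ℕ) := h1
          omega
        · have h1' : k + 1 = (i : ℕ) + 1 := h1
          omega
      -- the new piece is an induced path
      have hIP2 : IsIP G (a ⟨k, hkN1⟩ :: blk ⟨k + 1, hk⟩) := by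
        have h := (isIP_singleton G (a ⟨k, hkN1⟩)).glue (hblk_IP ⟨k + 1, hk⟩)
          (by simp) (hblk_ne _) ?_ ?_
        · exact h
        · intro x hx
          simp only [List.mem_singleton] at hx
          subst hx
          rw [hblk_mem]
          rintro ⟨j, hj1, hj2, heq⟩
          exact haoutn ⟨k, hkN1⟩ ⟨k + 1, hk⟩ j (lt_of_le_of_lt hj2 (hστ _).2) heq
        · intro x hx y hy
          simp only [List.mem_singleton] at hx
          subst hx
          rw [List.getLast_singleton, hblk_head]
          obtain ⟨j, hj1, hj2, rfl⟩ := (hblk_mem _ y).mp hy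
          rw [hAs j hj1 hj2,
            hPn_inj _ _ _ _ (lt_of_le_of_lt hj2 (hστ _).2) (lt_of_le_of_lt (le_of_lt (hστ _).1) (hστ _).2)]
          simp
      -- gluing
      rw [hchS k hk]
      have hne2 : (a ⟨k, by omega⟩ :: blk ⟨k + 1, hk⟩ : List V) ≠ [] := List.cons_ne_nil _ _
      have hdisj : ∀ x ∈ ch k, x ∉ (a ⟨k, by omega⟩ :: blk ⟨k + 1, hk⟩ : List V) := by
        intro x hx hx2
        rcases List.mem_cons.mp hx2 with h2 | h2
        · subst h2
          rcases hmem _ hx with ⟨i, hik, j, hj1, hj2, heq⟩ | ⟨i, hik, heq⟩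
          · exact haoutn ⟨k, by omega⟩ i j (lt_of_le_of_lt hj2 (hστ _).2) heq
          · have h3 : (i : ℕ) = k := congrArg Fin.val (hainj heq.symm)
            omega
        · obtain ⟨j', hj1', hj2', rfl⟩ := (hblk_mem _ _).mp h2
          rcases hmem _ hx with ⟨i, hik, j, hj1, hj2, heq⟩ | ⟨i, hik, heq⟩
          · have := (hPn_inj ⟨k + 1, hk⟩ i j' j (lt_of_le_of_lt hj2' (hστ _).2)
              (lt_of_le_of_lt hj2 (hστ _).2)).mp heq
            have h3 : k + 1 = (i : ℕ) := congrArg Fin.val this.1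
            omega
          · exact haoutn i ⟨k + 1, hk⟩ j' (lt_of_le_of_lt hj2' (hστ _).2) heq.symm
      have hcross : ∀ x ∈ ch k, ∀ y ∈ (a ⟨k, by omega⟩ :: blk ⟨k + 1, hk⟩ : List V),
          (G.Adj x y ↔ (x = (ch k).getLast hne ∧
            y = (a ⟨k, by omega⟩ :: blk ⟨k + 1, hk⟩ : List V).head hne2)) := by
        intro x hx y hy
        rw [List.head_cons, hlast hne]
        rcases List.mem_cons.mp hy with h2 | h2
        · subst h2
          rcases hmem _ hx with ⟨i, hik, j, hj1, hj2, rfl⟩ | ⟨i, hik, rfl⟩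
          · rw [G.adj_comm, hAe i j hik hj1 hj2,
              hPn_inj _ _ _ _ (lt_of_le_of_lt hj2 (hστ _).2) (hστ _).2]
            simp
          · refine iff_of_false (haind i _) ?_
            rintro ⟨h3, _⟩
            exact haoutn i ⟨k, by omega⟩ _ (hστ _).2 h3
        · obtain ⟨j', hj1', hj2', rfl⟩ := (hblk_mem _ _).mp h2
          have hj'L : j' < L := lt_of_le_of_lt hj2' (hστ _).2
          rcases hmem _ hx with ⟨i, hik, j, hj1, hj2, rfl⟩ | ⟨i, hik, rfl⟩
          · refine iff_of_false ?_ ?_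
            · intro hadj
              have := (hPn_adj i ⟨k + 1, hk⟩ j j' (lt_of_le_of_lt hj2 (hστ _).2) hj'L).mp hadj
              have h3 : (i : ℕ) = k + 1 := congrArg Fin.val this.1
              omega
            · rintro ⟨_, h3⟩
              exact haoutn ⟨k, by omega⟩ ⟨k + 1, hk⟩ j' hj'L h3.symm
          · refine iff_of_false (hA_none i hik j' hj'L) ?_
            rintro ⟨h3, _⟩
            exact haoutn i ⟨k, by omega⟩ _ (hστ _).2 h3
      have hglue := hIP.glue hIP2 hne hne2 hdisj hcross
      refine ⟨List.append_ne_nil_of_right_ne_nil _ hne2, hglue, ?_, ?_, ?_⟩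
      · intro hne'
        rw [List.getLast_append]
        rw [dif_neg (by simp)]
        rw [List.getLast_cons (hblk_ne _)]
        exact hblk_last _
      · intro x hx
        rcases List.mem_append.mp hx with h2 | h2
        · rcases hmem _ h2 with ⟨i, hik, j, hj1, hj2, rfl⟩ | ⟨i, hik, rfl⟩
          · exact Or.inl ⟨i, by omega, j, hj1, hj2, rfl⟩
          · exact Or.inr ⟨i, by omega, rfl⟩
        · rcases List.mem_cons.mp h2 with h3 | h3
          · exact Or.inr ⟨⟨k, hkN1⟩, Nat.lt_succ_self k, h3⟩
          · obtain ⟨j, hj1, hj2, rfl⟩ := (hblk_mem _ _).mp h3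
            exact Or.inl ⟨⟨k + 1, hk⟩, Nat.le_refl (k + 1), j, hj1, hj2, rfl⟩
      · rw [List.length_append, List.length_cons, hblk_len]
        have h1 := (hσ ⟨k + 1, hk⟩).1
        have h2 := (hτ ⟨k + 1, hk⟩).1
        have h3 : (k + 1 + 1) * (L - 2 * m) = (k + 1) * (L - 2 * m) + (L - 2 * m) := by ring
        rw [h3]
        omega
  -- conclusion
  obtain ⟨hne, hIP, hlast, hmem, hlen⟩ := key (N - 1) (by omega)
  refine ⟨(ch (N - 1)).length, ?_, fun x => (ch (N - 1)).get x, ?_, ?_⟩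
  · have h2 : N - 1 + 1 = N := by omega
    calc N * (L - 2 * m) = (N - 1 + 1) * (L - 2 * m) := by rw [h2]
      _ ≤ _ := hlen
  · exact List.nodup_iff_injective_get.mp hIP.1
  · intro x y
    show G.Adj ((ch (N - 1)).get x) ((ch (N - 1)).get y) ↔ _
    rw [List.get_eq_getElem, List.get_eq_getElem]
    exact hIP.2 x y x.isLt y.isLt
end

section
/- Let F be a forest on k vertices, σ₀ : V(F) → [n] an injection, and σ : V(F) → [n] another injection compatible with σ₀ (i.e., on S = V(F_σ) ∩ V(F_{σ₀}) the edge sets of F_σ[S] and F_{σ₀}[S] coincide). Let I_σ = F_σ ∩ F_{σ₀} have s vertices and c components. Then, in G(n,p) with 0 < p < 1, the conditional probability that F_σ is induced given that F_{σ₀} is induced equals p^{e(F) − s + c} · (1 − p)^{C(k,2) − C(s,2) − e(F) + s − c}. -/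
open MeasureTheory

/-- The binomial random graph `G(n,p)`, modelled as the product Bernoulli
measure on the indicator functions of the potential edges. -/
noncomputable def gnp (n : ℕ) (p : ENNReal) (hp : p ≤ 1) :
    Measure (Sym2 (Fin n) → Bool) :=
  Measure.pi fun _ => (PMF.bernoulli p.toNNReal
    (by simpa using ENNReal.toNNReal_mono ENNReal.one_ne_top hp)).toMeasure

/-- The event that the labelled copy `F_σ` of the graph `F` under the
injection `σ` is an induced subgraph. -/
def inducedCopyEvent {U : Type*} (F : SimpleGraph U) {n : ℕ} (σ : U ↪ Fin n) :
    Set (Sym2 (Fin n) → Bool) :=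
  {ω | ∀ x y : U, x ≠ y → (ω s(σ x, σ y) = true ↔ F.Adj x y)}

section Aux

open SimpleGraph Finset

variable {V : Type*}

lemma aux_isAcyclic_of_hom {W : Type*} {G : SimpleGraph V} {H : SimpleGraph W} (f : G →g H)
    (hf : Function.Injective f) (hH : H.IsAcyclic) : G.IsAcyclic :=
  fun _ c hc => hH (c.map f) (hc.map hf)

lemma aux_induce_supp_connected [DecidableEq V] (H : SimpleGraph V) (C : H.ConnectedComponent) :
    (H.induce C.supp).Connected := by
  rw [connected_induce_iff, Subgraph.connected_iff_forall_exists_walk_subgraph]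
  constructor
  · obtain ⟨v, hv⟩ := C.exists_rep
    exact ⟨v, show H.connectedComponentMk v = C from hv⟩
  · intro u v hu hv
    simp only [Subgraph.induce_verts, ConnectedComponent.mem_supp_iff] at hu hv
    obtain ⟨p⟩ : H.Reachable u v := ConnectedComponent.exact (hu.trans hv.symm)
    refine ⟨p, ?_, ?_⟩
    · intro w hw
      rw [Walk.mem_verts_toSubgraph] at hw
      have : H.Reachable u w := (p.takeUntil w hw).reachable
      simp only [Subgraph.induce_verts, ConnectedComponent.mem_supp_iff]
      rw [← hu]
      exact (ConnectedComponent.sound this).symm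
    · intro a b hab
      have h1 := p.toSubgraph.adj_sub hab
      have h2 := p.toSubgraph.edge_vert hab
      have h3 := p.toSubgraph.edge_vert hab.symm
      refine ⟨?_, ?_, h1⟩
      · rw [ConnectedComponent.mem_supp_iff, ← hu]
        exact (ConnectedComponent.sound
          ((p.takeUntil a (by rwa [← Walk.mem_verts_toSubgraph])).reachable)).symm
      · rw [ConnectedComponent.mem_supp_iff, ← hu]
        exact (ConnectedComponent.sound
          ((p.takeUntil b (by rwa [← Walk.mem_verts_toSubgraph])).reachable)).symm

lemma aux_forest_card [Fintype V] [DecidableEq V] (H : SimpleGraph V) [DecidableRel H.Adj]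
    (hH : H.IsAcyclic) :
    H.edgeFinset.card + Fintype.card H.ConnectedComponent = Fintype.card V := by
  classical
  have htree : ∀ C : H.ConnectedComponent,
      (H.induce C.supp).edgeFinset.card + 1 = Fintype.card C.supp := by
    intro C
    refine IsTree.card_edgeFinset ⟨aux_induce_supp_connected H C, ?_⟩
    exact aux_isAcyclic_of_hom
      ((SimpleGraph.Embedding.induce C.supp : H.induce C.supp ↪g H)).toHom
      (SimpleGraph.Embedding.induce C.supp : H.induce C.supp ↪g H).injective hH
  set compOf : Sym2 V → H.ConnectedComponent :=
    fun e => H.connectedComponentMk (Quot.out e).1 with hcompOf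
  have hcomp_mk : ∀ x y : V, H.Adj x y → compOf s(x, y) = H.connectedComponentMk x := by
    intro x y h
    have hout : s((Quot.out s(x,y)).1, (Quot.out s(x,y)).2) = s(x, y) := by
      show Quot.mk _ (Quot.out s(x,y)) = s(x,y)
      exact Quot.out_eq _
    rw [Sym2.eq_iff] at hout
    rcases hout with ⟨h1, _⟩ | ⟨h1, h2⟩
    · show H.connectedComponentMk (Quot.out s(x,y)).1 = _
      rw [h1]
    · show H.connectedComponentMk (Quot.out s(x,y)).1 = _
      rw [h1]
      exact ConnectedComponent.sound h.symm.reachable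
  have hfiber : ∀ C : H.ConnectedComponent,
      (H.edgeFinset.filter (fun e => compOf e = C)).card
        = (H.induce C.supp).edgeFinset.card := by
    intro C
    rw [← Finset.card_image_of_injective _ (Sym2.map.injective Subtype.val_injective)]
    congr 1
    ext e
    simp only [Finset.mem_filter, Finset.mem_image, mem_edgeFinset]
    constructor
    · rintro ⟨he, hC⟩
      induction e with
      | _ x y =>
        have hadj : H.Adj x y := he
        have hx : H.connectedComponentMk x = C := by rw [← hC]; exact (hcomp_mk x y hadj).symm
        have hy : H.connectedComponentMk y = C := by
          rw [← hx]; exact ConnectedComponent.sound hadj.symm.reachable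
        exact ⟨s(⟨x, hx⟩, ⟨y, hy⟩), hadj, rfl⟩
    · rintro ⟨e', he', rfl⟩
      induction e' with
      | _ a b =>
        have hadj : H.Adj ↑a ↑b := he'
        refine ⟨hadj, ?_⟩
        rw [Sym2.map_pair_eq, hcomp_mk _ _ hadj]
        exact a.2
  have hV : Fintype.card V
      = ∑ C : H.ConnectedComponent, Fintype.card C.supp := by
    rw [← Finset.card_univ, Finset.card_eq_sum_card_fiberwise
      (f := H.connectedComponentMk) (fun v _ => Finset.mem_univ _)]
    refine Finset.sum_congr rfl fun C _ => ?_
    rw [Fintype.card_subtype]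
    congr 1
    ext v
    simp [ConnectedComponent.mem_supp_iff]
  have hE : H.edgeFinset.card
      = ∑ C : H.ConnectedComponent, (H.induce C.supp).edgeFinset.card := by
    rw [Finset.card_eq_sum_card_fiberwise (f := compOf) (fun e _ => Finset.mem_univ _)]
    exact Finset.sum_congr rfl fun C _ => hfiber C
  rw [hE, hV, ← Finset.card_univ (α := H.ConnectedComponent), Finset.card_eq_sum_ones Finset.univ,
    ← Finset.sum_add_distrib]
  exact Finset.sum_congr rfl fun C _ => htree C

/-! ### Cylinder sets -/

def cylSet (n : ℕ) (T N : Finset (Sym2 (Fin n))) : Set (Sym2 (Fin n) → Bool) :=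
  Set.univ.pi
    (fun e => if e ∈ T then ({true} : Set Bool) else if e ∈ N then {false} else Set.univ)

lemma cylSet_measurable (n : ℕ) (T N : Finset (Sym2 (Fin n))) :
    MeasurableSet (cylSet n T N) := by
  refine MeasurableSet.univ_pi fun e => ?_
  split_ifs <;> simp

lemma cylSet_inter {n : ℕ} {T N T' N' : Finset (Sym2 (Fin n))}
    (h : Disjoint (T ∪ T') (N ∪ N')) :
    cylSet n T N ∩ cylSet n T' N' = cylSet n (T ∪ T') (N ∪ N') := by
  rw [cylSet, cylSet, cylSet, ← Set.pi_inter_distrib]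
  refine congrArg Set.univ.pi (funext fun e => ?_)
  have hd : e ∈ T ∪ T' → e ∉ N ∪ N' := fun ha => Finset.disjoint_left.mp h ha
  by_cases hT : e ∈ T <;> by_cases hT' : e ∈ T' <;>
    by_cases hN : e ∈ N <;> by_cases hN' : e ∈ N' <;>
    simp_all [Finset.mem_union]

lemma cylSet_measure {n : ℕ} {p : ENNReal} (hp : p ≤ 1) {T N : Finset (Sym2 (Fin n))}
    (h : Disjoint T N) :
    gnp n p hp (cylSet n T N) = p ^ T.card * (1 - p) ^ N.card := by
  rw [gnp, cylSet, Measure.pi_pi]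
  have hp' : p.toNNReal ≤ 1 := by simpa using ENNReal.toNNReal_mono ENNReal.one_ne_top hp
  have hptop : p ≠ ⊤ := ne_top_of_le_ne_top ENNReal.one_ne_top hp
  have hμt : (PMF.bernoulli p.toNNReal hp').toMeasure {true} = p := by
    rw [PMF.toMeasure_apply_singleton _ _ (measurableSet_singleton _), PMF.bernoulli_apply]
    simp [ENNReal.coe_toNNReal hptop]
  have hμf : (PMF.bernoulli p.toNNReal hp').toMeasure {false} = 1 - p := by
    rw [PMF.toMeasure_apply_singleton _ _ (measurableSet_singleton _), PMF.bernoulli_apply]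
    simp [ENNReal.coe_sub, ENNReal.coe_toNNReal hptop]
  have hμu : (PMF.bernoulli p.toNNReal hp').toMeasure Set.univ = 1 := measure_univ
  calc ∏ e : Sym2 (Fin n), (PMF.bernoulli p.toNNReal hp').toMeasure
        (if e ∈ T then ({true} : Set Bool) else if e ∈ N then {false} else Set.univ)
      = ∏ e : Sym2 (Fin n),
        ((if e ∈ T then p else 1) * (if e ∈ N then (1 - p) else 1)) := by
        refine Finset.prod_congr rfl fun e _ => ?_
        have hd : e ∈ T → e ∉ N := fun ha => Finset.disjoint_left.mp h ha
        by_cases hT : e ∈ T <;> by_cases hN : e ∈ N <;> simp_all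
    _ = p ^ T.card * (1 - p) ^ N.card := by
        rw [Finset.prod_mul_distrib, ← Finset.prod_filter, ← Finset.prod_filter]
        simp [Finset.filter_mem_eq_inter, Finset.univ_inter]

/-! ### Coordinates of a labelled copy -/

variable {U : Type*} [Fintype U] [DecidableEq U] (F : SimpleGraph U) [DecidableRel F.Adj]
  {n : ℕ} (σ : U ↪ Fin n)

def trueCoords : Finset (Sym2 (Fin n)) := F.edgeFinset.image (Sym2.map σ)

def falseCoords : Finset (Sym2 (Fin n)) :=
  ((Finset.univ : Finset (Sym2 U)).filter
    (fun e => ¬ e.IsDiag ∧ e ∉ F.edgeFinset)).image (Sym2.map σ)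

lemma mem_trueCoords_iff {e : Sym2 (Fin n)} :
    e ∈ trueCoords F σ ↔ e ∈ (F.map σ).edgeSet := by
  constructor
  · rw [trueCoords, Finset.mem_image]
    rintro ⟨e', he', rfl⟩
    revert he'
    induction e' using Sym2.ind with
    | _ x y =>
      intro he'
      rw [Sym2.map_pair_eq, SimpleGraph.mem_edgeSet, SimpleGraph.map_adj]
      exact ⟨x, y, SimpleGraph.mem_edgeFinset.mp he', rfl, rfl⟩
  · intro he
    rw [trueCoords, Finset.mem_image]
    revert he
    induction e using Sym2.ind with
    | _ u v =>
      intro he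
      rw [SimpleGraph.mem_edgeSet, SimpleGraph.map_adj] at he
      obtain ⟨x, y, hxy, rfl, rfl⟩ := he
      exact ⟨s(x, y), SimpleGraph.mem_edgeFinset.mpr hxy, Sym2.map_pair_eq _ _ _⟩

lemma mem_falseCoords_iff {e : Sym2 (Fin n)} :
    e ∈ falseCoords F σ ↔
      ¬ e.IsDiag ∧ (∀ u ∈ e, u ∈ Set.range ⇑σ) ∧ e ∉ (F.map σ).edgeSet := by
  constructor
  · rw [falseCoords, Finset.mem_image]
    rintro ⟨e', he', rfl⟩
    revert he'
    induction e' using Sym2.ind with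
    | _ x y =>
      intro he'
      rw [Finset.mem_filter] at he'
      obtain ⟨-, hnd, hne⟩ := he'
      rw [Sym2.mk_isDiag_iff] at hnd
      rw [Sym2.map_pair_eq]
      refine ⟨?_, ?_, ?_⟩
      · rw [Sym2.mk_isDiag_iff]
        exact fun h => hnd (σ.injective h)
      · intro u hu
        rw [Sym2.mem_iff] at hu
        rcases hu with rfl | rfl
        · exact ⟨x, rfl⟩
        · exact ⟨y, rfl⟩
      · intro hmem
        rw [SimpleGraph.mem_edgeSet, SimpleGraph.map_adj] at hmem
        obtain ⟨x', y', h', hx', hy'⟩ := hmem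
        exact hne (SimpleGraph.mem_edgeFinset.mpr
          (by rwa [σ.injective hx', σ.injective hy'] at h'))
  · intro h
    rw [falseCoords, Finset.mem_image]
    revert h
    induction e using Sym2.ind with
    | _ u v =>
      rintro ⟨hnd, hrg, hne⟩
      obtain ⟨x, rfl⟩ := hrg u (by rw [Sym2.mem_iff]; left; rfl)
      obtain ⟨y, rfl⟩ := hrg v (by rw [Sym2.mem_iff]; right; rfl)
      rw [Sym2.mk_isDiag_iff] at hnd
      refine ⟨s(x, y), ?_, Sym2.map_pair_eq _ _ _⟩
      rw [Finset.mem_filter]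
      refine ⟨Finset.mem_univ _, by rw [Sym2.mk_isDiag_iff]; exact fun h => hnd (by rw [h]), ?_⟩
      intro hE
      apply hne
      rw [SimpleGraph.mem_edgeSet, SimpleGraph.map_adj]
      exact ⟨x, y, SimpleGraph.mem_edgeFinset.mp hE, rfl, rfl⟩

lemma trueCoords_card : (trueCoords F σ).card = F.edgeFinset.card :=
  Finset.card_image_of_injective _ (Sym2.map.injective σ.injective)

lemma falseCoords_card :
    (falseCoords F σ).card = (Fintype.card U).choose 2 - F.edgeFinset.card := by
  rw [falseCoords, Finset.card_image_of_injective _ (Sym2.map.injective σ.injective)]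
  have h1 : (Finset.univ : Finset (Sym2 U)).filter (fun e => ¬ e.IsDiag ∧ e ∉ F.edgeFinset)
      = ((Finset.univ : Finset (Sym2 U)).filter (fun e => ¬ e.IsDiag)) \ F.edgeFinset := by
    ext e
    simp only [Finset.mem_filter, Finset.mem_sdiff, Finset.mem_univ, true_and]
  have h2 : F.edgeFinset ⊆ (Finset.univ : Finset (Sym2 U)).filter (fun e => ¬ e.IsDiag) := by
    intro e he
    rw [Finset.mem_filter]
    exact ⟨Finset.mem_univ _,
      SimpleGraph.not_isDiag_of_mem_edgeSet F (SimpleGraph.mem_edgeFinset.mp he)⟩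
  rw [h1, Finset.card_sdiff_of_subset h2]
  congr 1
  rw [← Sym2.card_subtype_not_diag, Fintype.card_subtype]

lemma event_eq_cylSet :
    inducedCopyEvent F σ = cylSet n (trueCoords F σ) (falseCoords F σ) := by
  ext ω
  simp only [inducedCopyEvent, Set.mem_setOf_eq, cylSet, Set.mem_pi, Set.mem_univ,
    forall_const]
  constructor
  · intro h e
    by_cases hT : e ∈ trueCoords F σ
    · rw [if_pos hT]
      rw [mem_trueCoords_iff] at hT
      revert hT
      induction e using Sym2.ind with
      | _ u v =>
        intro hT
        rw [SimpleGraph.mem_edgeSet, SimpleGraph.map_adj] at hT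
        obtain ⟨x, y, hxy, rfl, rfl⟩ := hT
        exact (h x y hxy.ne).mpr hxy
    · rw [if_neg hT]
      by_cases hN : e ∈ falseCoords F σ
      · rw [if_pos hN]
        rw [mem_falseCoords_iff] at hN
        obtain ⟨hnd, hrg, hne⟩ := hN
        revert hnd hrg hne
        induction e using Sym2.ind with
        | _ u v =>
          intro hnd hrg hne
          obtain ⟨x, rfl⟩ := hrg u (by rw [Sym2.mem_iff]; left; rfl)
          obtain ⟨y, rfl⟩ := hrg v (by rw [Sym2.mem_iff]; right; rfl)
          rw [Sym2.mk_isDiag_iff] at hnd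
          have hxy : x ≠ y := fun hh => hnd (by rw [hh])
          have hnadj : ¬ F.Adj x y := by
            intro hadj
            exact hne (by
              rw [SimpleGraph.mem_edgeSet, SimpleGraph.map_adj]
              exact ⟨x, y, hadj, rfl, rfl⟩)
          have := h x y hxy
          show ω s(σ x, σ y) ∈ ({false} : Set Bool)
          rw [Set.mem_singleton_iff, ← Bool.not_eq_true]
          exact fun hh => hnadj (this.mp hh)
      · rw [if_neg hN]
        trivial
  · intro h x y hxy
    by_cases hadj : F.Adj x y
    · have hT : s(σ x, σ y) ∈ trueCoords F σ := by
        rw [mem_trueCoords_iff, SimpleGraph.mem_edgeSet, SimpleGraph.map_adj]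
        exact ⟨x, y, hadj, rfl, rfl⟩
      have := h s(σ x, σ y)
      rw [if_pos hT, Set.mem_singleton_iff] at this
      exact iff_of_true this hadj
    · have hN : s(σ x, σ y) ∈ falseCoords F σ := by
        rw [mem_falseCoords_iff]
        refine ⟨?_, ?_, ?_⟩
        · rw [Sym2.mk_isDiag_iff]
          exact fun hh => hxy (σ.injective hh)
        · intro u hu
          rw [Sym2.mem_iff] at hu
          rcases hu with rfl | rfl
          · exact ⟨x, rfl⟩
          · exact ⟨y, rfl⟩
        · intro hmem
          rw [SimpleGraph.mem_edgeSet, SimpleGraph.map_adj] at hmem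
          obtain ⟨x', y', h', hx', hy'⟩ := hmem
          exact hadj (by rwa [σ.injective hx', σ.injective hy'] at h')
      have hT : s(σ x, σ y) ∉ trueCoords F σ := by
        rw [mem_trueCoords_iff]
        exact (mem_falseCoords_iff F σ).mp hN |>.2.2
      have := h s(σ x, σ y)
      rw [if_neg hT, if_pos hN, Set.mem_singleton_iff] at this
      rw [this]
      simp [hadj]

end Aux

/-- For a forest `F` on `k` vertices and compatible injections `σ₀, σ` into
`[n]`, if the intersection graph `I_σ = F_σ ∩ F_{σ₀}` (on
`S = V(F_σ) ∩ V(F_{σ₀})`) has `s` vertices and `c` components, then in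
`G(n,p)` the conditional probability that `F_σ` is induced given that
`F_{σ₀}` is induced equals
`p^{e(F) - s + c} (1-p)^{C(k,2) - C(s,2) - e(F) + s - c}`. -/
theorem stmt_19 {U : Type*} [Fintype U] [DecidableEq U] (F : SimpleGraph U)
    [DecidableRel F.Adj] (hF : F.IsAcyclic) (k n s c : ℕ)
    (hk : Fintype.card U = k) (hkn : k ≤ n)
    (σ₀ σ : U ↪ Fin n) (p : ENNReal) (hp0 : 0 < p) (hp1 : p < 1)
    (hcompat : ∀ u v : Fin n,
      u ∈ Set.range σ ∩ Set.range σ₀ → v ∈ Set.range σ ∩ Set.range σ₀ →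
        ((F.map σ).Adj u v ↔ (F.map σ₀).Adj u v))
    (hs : (Set.range σ ∩ Set.range σ₀ : Set (Fin n)).ncard = s)
    (hc : Nat.card
        (((F.map σ ⊓ F.map σ₀).induce
          (Set.range σ ∩ Set.range σ₀)).ConnectedComponent) = c) :
    ProbabilityTheory.cond (gnp n p hp1.le) (inducedCopyEvent F σ₀)
        (inducedCopyEvent F σ)
      = p ^ (F.edgeFinset.card - (s - c)) *
        (1 - p) ^ ((k.choose 2 - F.edgeFinset.card) - (s.choose 2 - (s - c))) := by
  classical
  set S : Set (Fin n) := Set.range ⇑σ ∩ Set.range ⇑σ₀ with hSdef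
  set G : SimpleGraph (Fin n) := F.map σ ⊓ F.map σ₀ with hGdef
  set G' : SimpleGraph ↥S := G.induce S with hG'def
  have hrange : ∀ (τ : U ↪ Fin n) (u v : Fin n), (F.map τ).Adj u v → u ∈ Set.range ⇑τ := by
    intro τ u v h
    rw [SimpleGraph.map_adj] at h
    obtain ⟨x, y, -, hx, -⟩ := h
    exact ⟨x, hx⟩
  have hrgE : ∀ (τ : U ↪ Fin n) (e : Sym2 (Fin n)),
      e ∈ (F.map τ).edgeSet → ∀ u ∈ e, u ∈ Set.range ⇑τ := by
    intro τ e
    induction e using Sym2.ind with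
    | _ u v =>
      intro he w hw
      rw [SimpleGraph.mem_edgeSet] at he
      rw [Sym2.mem_iff] at hw
      rcases hw with rfl | rfl
      · exact hrange τ w v he
      · exact hrange τ w u he.symm
  have hboth : ∀ e : Sym2 (Fin n), (∀ u ∈ e, u ∈ S) →
      (e ∈ (F.map σ).edgeSet ↔ e ∈ (F.map σ₀).edgeSet) := by
    intro e
    induction e using Sym2.ind with
    | _ u v =>
      intro hrg
      rw [SimpleGraph.mem_edgeSet, SimpleGraph.mem_edgeSet]
      exact hcompat u v (hrg u (by rw [Sym2.mem_iff]; left; rfl))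
        (hrg v (by rw [Sym2.mem_iff]; right; rfl))
  have hdisj : Disjoint (trueCoords F σ₀ ∪ trueCoords F σ)
      (falseCoords F σ₀ ∪ falseCoords F σ) := by
    rw [Finset.disjoint_left]
    intro e heT heN
    rw [Finset.mem_union, mem_trueCoords_iff, mem_trueCoords_iff] at heT
    rw [Finset.mem_union, mem_falseCoords_iff, mem_falseCoords_iff] at heN
    rcases heN with ⟨hnd, hrg, hne⟩ | ⟨hnd, hrg, hne⟩
    · rcases heT with hT | hT
      · exact hne hT
      · exact hne ((hboth e (fun u hu => ⟨hrgE σ e hT u hu, hrg u hu⟩)).mp hT)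
    · rcases heT with hT | hT
      · exact hne ((hboth e (fun u hu => ⟨hrg u hu, hrgE σ₀ e hT u hu⟩)).mpr hT)
      · exact hne hT
  have hScard : Fintype.card ↥S = s := by
    rw [← Nat.card_eq_fintype_card, Nat.card_coe_set_eq, hs]
  have hG'acyclic : G'.IsAcyclic := by
    have hψ : ∀ v : ↥S, ∃ x : U, σ x = ↑v := fun v => v.2.1
    choose ψ hψs using hψ
    refine aux_isAcyclic_of_hom (W := U) ⟨ψ, ?_⟩ ?_ hF
    · intro a b hab
      have h1 : (F.map σ).Adj ↑a ↑b := hab.1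
      rw [SimpleGraph.map_adj] at h1
      obtain ⟨x, y, hxy, hx, hy⟩ := h1
      have hax : ψ a = x := σ.injective (by rw [hψs a, ← hx])
      have hby : ψ b = y := σ.injective (by rw [hψs b, ← hy])
      rw [hax, hby]
      exact hxy
    · intro a b h
      have hσ : σ (ψ a) = σ (ψ b) := congrArg (⇑σ) h
      exact Subtype.ext (by rw [← hψs a, ← hψs b, hσ])
  have hforest := aux_forest_card G' hG'acyclic
  have hccard : Fintype.card G'.ConnectedComponent = c := by
    rw [← Nat.card_eq_fintype_card]
    exact hc
  have hedgeG' : G'.edgeFinset.card = s - c := by omega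
  have hTT : trueCoords F σ ∩ trueCoords F σ₀
      = G'.edgeFinset.image (Sym2.map (Subtype.val : ↥S → Fin n)) := by
    ext e
    rw [Finset.mem_inter, mem_trueCoords_iff, mem_trueCoords_iff, Finset.mem_image]
    constructor
    · rintro ⟨h1, h2⟩
      have hrg : ∀ u ∈ e, u ∈ S := fun u hu => ⟨hrgE σ e h1 u hu, hrgE σ₀ e h2 u hu⟩
      revert h1 h2 hrg
      induction e using Sym2.ind with
      | _ u v =>
        intro h1 h2 hrg
        rw [SimpleGraph.mem_edgeSet] at h1 h2
        have hu : u ∈ S := hrg u (by rw [Sym2.mem_iff]; left; rfl)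
        have hv : v ∈ S := hrg v (by rw [Sym2.mem_iff]; right; rfl)
        refine ⟨s(⟨u, hu⟩, ⟨v, hv⟩), ?_, Sym2.map_pair_eq _ _ _⟩
        rw [SimpleGraph.mem_edgeFinset, SimpleGraph.mem_edgeSet]
        exact ⟨h1, h2⟩
    · rintro ⟨e', he', rfl⟩
      revert he'
      induction e' using Sym2.ind with
      | _ a b =>
        intro he'
        rw [SimpleGraph.mem_edgeFinset, SimpleGraph.mem_edgeSet] at he'
        rw [Sym2.map_pair_eq]
        exact ⟨he'.1, he'.2⟩
  have hTTcard : (trueCoords F σ ∩ trueCoords F σ₀).card = s - c := by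
    rw [hTT, Finset.card_image_of_injective _ (Sym2.map.injective Subtype.val_injective),
      hedgeG']
  set W : Finset (Sym2 (Fin n)) :=
    Finset.univ.filter (fun e => ¬ e.IsDiag ∧ ∀ u ∈ e, u ∈ S) with hWdef
  have hWcard : W.card = s.choose 2 := by
    have himg : W = ((Finset.univ : Finset (Sym2 ↥S)).filter (fun e => ¬ e.IsDiag)).image
        (Sym2.map (Subtype.val : ↥S → Fin n)) := by
      ext e
      rw [hWdef, Finset.mem_filter, Finset.mem_image]
      constructor
      · rintro ⟨-, hnd, hrg⟩
        revert hnd hrg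
        induction e using Sym2.ind with
        | _ u v =>
          intro hnd hrg
          have hu : u ∈ S := hrg u (by rw [Sym2.mem_iff]; left; rfl)
          have hv : v ∈ S := hrg v (by rw [Sym2.mem_iff]; right; rfl)
          refine ⟨s(⟨u, hu⟩, ⟨v, hv⟩), ?_, Sym2.map_pair_eq _ _ _⟩
          rw [Finset.mem_filter]
          refine ⟨Finset.mem_univ _, ?_⟩
          rw [Sym2.mk_isDiag_iff] at hnd ⊢
          exact fun h => hnd (congrArg Subtype.val h)
      · rintro ⟨e', he', rfl⟩
        revert he'
        induction e' using Sym2.ind with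
        | _ a b =>
          intro he'
          rw [Finset.mem_filter, Sym2.mk_isDiag_iff] at he'
          rw [Sym2.map_pair_eq]
          refine ⟨Finset.mem_univ _, ?_, ?_⟩
          · rw [Sym2.mk_isDiag_iff]
            exact fun h => he'.2 (Subtype.ext h)
          · intro u hu
            rw [Sym2.mem_iff] at hu
            rcases hu with rfl | rfl
            · exact a.2
            · exact b.2
    rw [himg, Finset.card_image_of_injective _ (Sym2.map.injective Subtype.val_injective),
      ← Fintype.card_subtype, Sym2.card_subtype_not_diag, hScard]
  have hTsubW : trueCoords F σ ∩ trueCoords F σ₀ ⊆ W := by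
    intro e he
    rw [Finset.mem_inter, mem_trueCoords_iff, mem_trueCoords_iff] at he
    rw [hWdef, Finset.mem_filter]
    exact ⟨Finset.mem_univ _, SimpleGraph.not_isDiag_of_mem_edgeSet _ he.1,
      fun u hu => ⟨hrgE σ e he.1 u hu, hrgE σ₀ e he.2 u hu⟩⟩
  have hNN : falseCoords F σ ∩ falseCoords F σ₀
      = W \ (trueCoords F σ ∩ trueCoords F σ₀) := by
    ext e
    rw [Finset.mem_inter, mem_falseCoords_iff, mem_falseCoords_iff, Finset.mem_sdiff, hWdef,
      Finset.mem_filter, Finset.mem_inter, mem_trueCoords_iff, mem_trueCoords_iff]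
    constructor
    · rintro ⟨⟨hnd, hrgσ, hneσ⟩, ⟨-, hrgσ₀, hneσ₀⟩⟩
      exact ⟨⟨Finset.mem_univ _, hnd, fun u hu => ⟨hrgσ u hu, hrgσ₀ u hu⟩⟩,
        fun h => hneσ h.1⟩
    · rintro ⟨⟨-, hnd, hrg⟩, hnot⟩
      have hiff := hboth e hrg
      have hneσ : e ∉ (F.map σ).edgeSet := fun h => hnot ⟨h, hiff.mp h⟩
      have hneσ₀ : e ∉ (F.map σ₀).edgeSet := fun h => hnot ⟨hiff.mpr h, h⟩
      exact ⟨⟨hnd, fun u hu => (hrg u hu).1, hneσ⟩, ⟨hnd, fun u hu => (hrg u hu).2, hneσ₀⟩⟩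
  have hNNcard : (falseCoords F σ ∩ falseCoords F σ₀).card = s.choose 2 - (s - c) := by
    rw [hNN, Finset.card_sdiff_of_subset hTsubW, hWcard, hTTcard]
  -- cardinalities of the unions
  have hUT : (trueCoords F σ₀ ∪ trueCoords F σ).card
      = F.edgeFinset.card + (F.edgeFinset.card - (s - c)) := by
    have h1 := Finset.card_union_add_card_inter (trueCoords F σ₀) (trueCoords F σ)
    have h2 : (trueCoords F σ₀ ∩ trueCoords F σ).card = s - c := by
      rw [Finset.inter_comm]
      exact hTTcard
    have h4 := Finset.card_le_card
      (Finset.subset_union_left (s₁ := trueCoords F σ₀) (s₂ := trueCoords F σ))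
    rw [trueCoords_card, trueCoords_card, h2] at h1
    rw [trueCoords_card] at h4
    omega
  have hUN : (falseCoords F σ₀ ∪ falseCoords F σ).card
      = (k.choose 2 - F.edgeFinset.card)
        + ((k.choose 2 - F.edgeFinset.card) - (s.choose 2 - (s - c))) := by
    have h1 := Finset.card_union_add_card_inter (falseCoords F σ₀) (falseCoords F σ)
    have h2 : (falseCoords F σ₀ ∩ falseCoords F σ).card = s.choose 2 - (s - c) := by
      rw [Finset.inter_comm]
      exact hNNcard
    have h4 := Finset.card_le_card
      (Finset.subset_union_left (s₁ := falseCoords F σ₀) (s₂ := falseCoords F σ))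
    rw [falseCoords_card, falseCoords_card, hk, h2] at h1
    rw [falseCoords_card, hk] at h4
    omega
  have hdisjσ₀ : Disjoint (trueCoords F σ₀) (falseCoords F σ₀) :=
    hdisj.mono Finset.subset_union_left Finset.subset_union_left
  rw [event_eq_cylSet F σ₀, event_eq_cylSet F σ,
    ProbabilityTheory.cond_apply (cylSet_measurable n _ _),
    cylSet_inter hdisj, cylSet_measure hp1.le hdisjσ₀, cylSet_measure hp1.le hdisj,
    trueCoords_card, falseCoords_card, hk, hUT, hUN]
  have hpne : p ≠ 0 := hp0.ne'
  have hpnetop : p ≠ ⊤ := (hp1.trans_le le_top).ne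
  have h1p0 : (1 : ENNReal) - p ≠ 0 := by
    rw [ne_eq, tsub_eq_zero_iff_le]
    exact fun h => absurd hp1 (not_lt.mpr h)
  have h1ptop : (1 : ENNReal) - p ≠ ⊤ := (tsub_le_self.trans_lt ENNReal.one_lt_top).ne
  have hA0 : p ^ F.edgeFinset.card * (1 - p) ^ (k.choose 2 - F.edgeFinset.card) ≠ 0 :=
    mul_ne_zero (pow_ne_zero _ hpne) (pow_ne_zero _ h1p0)
  have hAtop : p ^ F.edgeFinset.card * (1 - p) ^ (k.choose 2 - F.edgeFinset.card) ≠ ⊤ :=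
    ENNReal.mul_ne_top (ENNReal.pow_ne_top hpnetop) (ENNReal.pow_ne_top h1ptop)
  rw [pow_add, pow_add, mul_mul_mul_comm, ← mul_assoc,
    ENNReal.inv_mul_cancel hA0 hAtop, one_mul]
end
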